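/- arXiv:2409.08571 — 4 statements merged into one kernel-verified Lean document; each statement's English description precedes it below -/
import Mathlib

section
/- Let K ≤ M(2,q) be an imprimitive subgroup of cube-free order m with p ∤ m. Then there exist a subgroup L of K with L ≤ D(2,q) and L normal in K, and an element x ∈ K with x ∉ D(2,q), such that the order of x is 2 or 4, K is generated by L together with x, and L ∩ ⟨x⟩ is trivial (so K = L ⋊ ⟨x⟩). -/
/-!
Let `D = K ∩ D(2,q)`. Irreducibility forces `K ⊄ D(2,q)`, and a product of two anti-diagonal
matrices is diagonal, so `D` is an abelian subgroup of index 2 in `K`. An element `y ∈ K ∖ D` has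
order `2^e r` with `r` odd and `e ≥ 1`, so `x = y^r ∉ D` has order `2^e`, and `e ≤ 2` because
`|K|` is cube-free. If `e = 1` then `K = D ⋊ ⟨x⟩`. If `e = 2` then `|K| = 4c` with `c` odd, so the
abelian group `D` of order `2c` has the unique involution `x²`, and `L = {a ∈ D | a^c = 1}` is a
normal complement of `⟨x⟩`: every `a ∈ D` is `a^(c+1) (a^c)⁻¹` with `a^(c+1) ∈ L` and
`a^c ∈ {1, x²}`.
-/

open Matrix

/-- A positive integer is cube-free if no prime cube divides it. -/
def CubeFree (m : ℕ) : Prop := ∀ r : ℕ, r.Prime → ¬ r ^ 3 ∣ m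

/-- A 2×2 matrix is diagonal. -/
def IsDiag2 {F : Type} [Field F] (A : Matrix (Fin 2) (Fin 2) F) : Prop :=
  A 0 1 = 0 ∧ A 1 0 = 0

/-- A 2×2 matrix is anti-diagonal. -/
def IsAnti2 {F : Type} [Field F] (A : Matrix (Fin 2) (Fin 2) F) : Prop :=
  A 0 0 = 0 ∧ A 1 1 = 0

/-- `D(2,q)`: the subgroup of invertible diagonal matrices in `GL(2,F)`. -/
def Dsub (F : Type) [Field F] : Subgroup (GL (Fin 2) F) where
  carrier := {g | IsDiag2 (g : Matrix (Fin 2) (Fin 2) F)}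
  one_mem' := by constructor <;> simp
  mul_mem' := by
    rintro a b ⟨ha1, ha2⟩ ⟨hb1, hb2⟩
    constructor <;>
      simp [Units.val_mul, Matrix.mul_apply, Fin.sum_univ_two, ha1, ha2, hb1, hb2]
  inv_mem' := by
    rintro g ⟨h1, h2⟩
    have hAB : (g : Matrix (Fin 2) (Fin 2) F) * ((g⁻¹ : GL (Fin 2) F) : Matrix (Fin 2) (Fin 2) F) = 1 := by
      exact_mod_cast g.mul_inv
    have hdet : (g : Matrix (Fin 2) (Fin 2) F).det ≠ 0 := by
      have : IsUnit (g : Matrix (Fin 2) (Fin 2) F) := ⟨g, rfl⟩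
      exact ((Matrix.isUnit_iff_isUnit_det _).mp this).ne_zero
    rw [Matrix.det_fin_two, h1, h2] at hdet
    simp only [zero_mul, mul_zero, sub_zero] at hdet
    have h00 : (g : Matrix (Fin 2) (Fin 2) F) 0 0 ≠ 0 := left_ne_zero_of_mul hdet
    have h11 : (g : Matrix (Fin 2) (Fin 2) F) 1 1 ≠ 0 := right_ne_zero_of_mul hdet
    have e01 := congrFun (congrFun hAB 0) 1
    have e10 := congrFun (congrFun hAB 1) 0
    simp [Matrix.mul_apply, Fin.sum_univ_two, h1, h2, Matrix.one_apply] at e01 e10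
    constructor <;> rw [Matrix.coe_units_inv]
    · rcases e01 with h | h
      · exact absurd h h00
      · exact h
    · rcases e10 with h | h
      · exact absurd h h11
      · exact h

section Msub
variable {F : Type} [Field F]

lemma IsDiag2.mul2 {A B : Matrix (Fin 2) (Fin 2) F} (hA : IsDiag2 A) (hB : IsDiag2 B) :
    IsDiag2 (A * B) := by
  obtain ⟨a1, a2⟩ := hA; obtain ⟨b1, b2⟩ := hB
  constructor <;> simp [Matrix.mul_apply, Fin.sum_univ_two, a1, a2, b1, b2]

lemma IsDiag2.mul_anti {A B : Matrix (Fin 2) (Fin 2) F} (hA : IsDiag2 A) (hB : IsAnti2 B) :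
    IsAnti2 (A * B) := by
  obtain ⟨a1, a2⟩ := hA; obtain ⟨b1, b2⟩ := hB
  constructor <;> simp [Matrix.mul_apply, Fin.sum_univ_two, a1, a2, b1, b2]

lemma IsAnti2.mul_diag {A B : Matrix (Fin 2) (Fin 2) F} (hA : IsAnti2 A) (hB : IsDiag2 B) :
    IsAnti2 (A * B) := by
  obtain ⟨a1, a2⟩ := hA; obtain ⟨b1, b2⟩ := hB
  constructor <;> simp [Matrix.mul_apply, Fin.sum_univ_two, a1, a2, b1, b2]

lemma IsAnti2.mul_anti {A B : Matrix (Fin 2) (Fin 2) F} (hA : IsAnti2 A) (hB : IsAnti2 B) :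
    IsDiag2 (A * B) := by
  obtain ⟨a1, a2⟩ := hA; obtain ⟨b1, b2⟩ := hB
  constructor <;> simp [Matrix.mul_apply, Fin.sum_univ_two, a1, a2, b1, b2]

/-- `M(2,q)`: the subgroup of monomial matrices (diagonal or anti-diagonal) in `GL(2,F)`. -/
def Msub (F : Type) [Field F] : Subgroup (GL (Fin 2) F) where
  carrier := {g | IsDiag2 (g : Matrix (Fin 2) (Fin 2) F) ∨ IsAnti2 (g : Matrix (Fin 2) (Fin 2) F)}
  one_mem' := by left; constructor <;> simp
  mul_mem' := by
    rintro a b (ha | ha) (hb | hb)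
    · left; have := ha.mul2 hb; simpa [Units.val_mul] using this
    · right; have := ha.mul_anti hb; simpa [Units.val_mul] using this
    · right; have := ha.mul_diag hb; simpa [Units.val_mul] using this
    · left; have := ha.mul_anti hb; simpa [Units.val_mul] using this
  inv_mem' := by
    rintro g (⟨h1, h2⟩ | ⟨h1, h2⟩)
    · left
      have hAB : (g : Matrix (Fin 2) (Fin 2) F) * ((g⁻¹ : GL (Fin 2) F) : Matrix (Fin 2) (Fin 2) F) = 1 := by
        exact_mod_cast g.mul_inv
      have hdet : (g : Matrix (Fin 2) (Fin 2) F).det ≠ 0 := by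
        have : IsUnit (g : Matrix (Fin 2) (Fin 2) F) := ⟨g, rfl⟩
        exact ((Matrix.isUnit_iff_isUnit_det _).mp this).ne_zero
      rw [Matrix.det_fin_two, h1, h2] at hdet
      simp only [zero_mul, mul_zero, sub_zero] at hdet
      have h00 : (g : Matrix (Fin 2) (Fin 2) F) 0 0 ≠ 0 := left_ne_zero_of_mul hdet
      have h11 : (g : Matrix (Fin 2) (Fin 2) F) 1 1 ≠ 0 := right_ne_zero_of_mul hdet
      have e01 := congrFun (congrFun hAB 0) 1
      have e10 := congrFun (congrFun hAB 1) 0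
      simp [Matrix.mul_apply, Fin.sum_univ_two, h1, h2, Matrix.one_apply] at e01 e10
      constructor <;> rw [Matrix.coe_units_inv]
      · rcases e01 with h | h
        · exact absurd h h00
        · exact h
      · rcases e10 with h | h
        · exact absurd h h11
        · exact h
    · right
      have hAB : (g : Matrix (Fin 2) (Fin 2) F) * ((g⁻¹ : GL (Fin 2) F) : Matrix (Fin 2) (Fin 2) F) = 1 := by
        exact_mod_cast g.mul_inv
      have hdet : (g : Matrix (Fin 2) (Fin 2) F).det ≠ 0 := by
        have : IsUnit (g : Matrix (Fin 2) (Fin 2) F) := ⟨g, rfl⟩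
        exact ((Matrix.isUnit_iff_isUnit_det _).mp this).ne_zero
      rw [Matrix.det_fin_two, h1, h2] at hdet
      simp only [zero_mul, mul_zero, zero_sub, neg_ne_zero] at hdet
      have h01 : (g : Matrix (Fin 2) (Fin 2) F) 0 1 ≠ 0 := left_ne_zero_of_mul hdet
      have h10 : (g : Matrix (Fin 2) (Fin 2) F) 1 0 ≠ 0 := right_ne_zero_of_mul hdet
      have e01 := congrFun (congrFun hAB 0) 1
      have e10 := congrFun (congrFun hAB 1) 0
      simp [Matrix.mul_apply, Fin.sum_univ_two, h1, h2, Matrix.one_apply] at e01 e10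
      constructor <;> rw [Matrix.coe_units_inv]
      · rcases e10 with h | h
        · exact absurd h h10
        · exact h
      · rcases e01 with h | h
        · exact absurd h h01
        · exact h

end Msub

section RepDefs
variable (F : Type) [Field F]

/-- A subgroup of `GL(2,F)` is reducible if some nonzero proper subspace of `F²` is
invariant under all its elements. -/
def Reducible (K : Subgroup (GL (Fin 2) F)) : Prop :=
  ∃ W : Submodule F (Fin 2 → F), W ≠ ⊥ ∧ W ≠ ⊤ ∧
    ∀ g ∈ K, ∀ v ∈ W, Matrix.mulVec (g : Matrix (Fin 2) (Fin 2) F) v ∈ W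

/-- `K` permutes the pair of one-dimensional subspaces `V₁, V₂` decomposing `F²`. -/
def ImprimitiveOn (K : Subgroup (GL (Fin 2) F)) (V₁ V₂ : Submodule F (Fin 2 → F)) : Prop :=
  Module.finrank F V₁ = 1 ∧ Module.finrank F V₂ = 1 ∧ IsCompl V₁ V₂ ∧
  ∀ g ∈ K,
    (V₁.map (Matrix.mulVecLin (g : Matrix (Fin 2) (Fin 2) F)) = V₁ ∧
     V₂.map (Matrix.mulVecLin (g : Matrix (Fin 2) (Fin 2) F)) = V₂) ∨
    (V₁.map (Matrix.mulVecLin (g : Matrix (Fin 2) (Fin 2) F)) = V₂ ∧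
     V₂.map (Matrix.mulVecLin (g : Matrix (Fin 2) (Fin 2) F)) = V₁)

/-- An irreducible subgroup of `GL(2,F)` is imprimitive if it permutes a pair of
one-dimensional subspaces decomposing `F²`. -/
def Imprimitive (K : Subgroup (GL (Fin 2) F)) : Prop :=
  ¬ Reducible F K ∧ ∃ V₁ V₂ : Submodule F (Fin 2 → F), ImprimitiveOn F K V₁ V₂

/-- An irreducible subgroup of `GL(2,F)` is primitive if it is not imprimitive. -/
def Primitive (K : Subgroup (GL (Fin 2) F)) : Prop :=
  ¬ Reducible F K ∧ ¬ ∃ V₁ V₂ : Submodule F (Fin 2 → F), ImprimitiveOn F K V₁ V₂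

end RepDefs

/-- Two subgroups are conjugate. -/
def IsConjugate {G : Type*} [Group G] (K₁ K₂ : Subgroup G) : Prop :=
  ∃ g : G, Subgroup.map (MulAut.conj g).toMonoidHom K₁ = K₂

namespace Subgroup

variable {G : Type*} [Group G]

def torsionBy (H : Subgroup G) [IsMulCommutative H] (n : ℕ) : Subgroup G where
  carrier := {g | g ∈ H ∧ g ^ n = 1}
  one_mem' := ⟨H.one_mem, one_pow n⟩
  mul_mem' := by
    rintro a b ⟨ha, han⟩ ⟨hb, hbn⟩
    refine ⟨H.mul_mem ha hb, ?_⟩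
    rw [Commute.mul_pow (setLike_mul_comm ha hb), han, hbn, one_mul]
  inv_mem' := by
    rintro a ⟨ha, han⟩
    exact ⟨H.inv_mem ha, by rw [inv_pow, han, inv_one]⟩

section torsionBy

variable {H : Subgroup G} [IsMulCommutative H] {n : ℕ}

theorem torsionBy_le : H.torsionBy n ≤ H := fun _ hg => hg.1

instance torsionBy_normal [H.Normal] : (H.torsionBy n).Normal where
  conj_mem g hg k :=
    ⟨Normal.conj_mem inferInstance g hg.1 k, by rw [conj_pow, hg.2, mul_one, mul_inv_cancel]⟩

end torsionBy

instance isMulCommutative_subgroupOf (H K : Subgroup G) [IsMulCommutative H] :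
    IsMulCommutative (H.subgroupOf K) :=
  ⟨⟨fun a b => Subtype.ext <| Subtype.ext <|
    setLike_mul_comm (mem_subgroupOf.mp a.2) (mem_subgroupOf.mp b.2)⟩⟩

theorem eq_of_ne_one_of_card_dvd_two {T : Subgroup G} (hT : Nat.card T ∣ 2) {a b : G}
    (ha : a ∈ T) (hb : b ∈ T) (ha1 : a ≠ 1) (hb1 : b ≠ 1) : a = b := by
  by_contra hab
  have : Finite T := Nat.finite_of_card_ne_zero (ne_zero_of_dvd_ne_zero two_ne_zero hT)
  have h3 : ({1, a, b} : Set G).ncard = 3 :=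
    Set.ncard_eq_three.mpr ⟨1, a, b, ha1.symm, hb1.symm, hab, rfl⟩
  have hle : ({1, a, b} : Set G).ncard ≤ (T : Set G).ncard :=
    Set.ncard_le_ncard (by simp [Set.insert_subset_iff, T.one_mem, ha, hb]) (Set.toFinite _)
  have hcard : (T : Set G).ncard = Nat.card T := (Nat.card_coe_set_eq _).symm
  have := Nat.le_of_dvd two_pos hT
  omega

variable {H : Subgroup G} {x : G} {c : ℕ}

theorem odd_pow_mem_iff_of_index_two (hH : H.index = 2) {n : ℕ} (hn : Odd n) (a : G) :
    a ^ n ∈ H ↔ a ∈ H := by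
  obtain ⟨k, rfl⟩ := hn
  rw [pow_succ, pow_mul, mul_mem_iff_of_index_two hH]
  simp [pow_mem (sq_mem_of_index_two hH a) k]

theorem exists_notMem_orderOf_eq_two_pow_of_index_two [Finite G] (hH : H.index = 2) :
    ∃ x ∉ H, ∃ e, 1 ≤ e ∧ orderOf x = 2 ^ e := by
  obtain ⟨y, hy, -⟩ := index_eq_two_iff_exists_notMem_and.mp hH
  obtain ⟨e, r, hr, hyr⟩ := Nat.exists_eq_two_pow_mul_odd (orderOf_pos y).ne'
  refine ⟨y ^ r, (odd_pow_mem_iff_of_index_two hH hr y).not.mpr hy, e, ?_, ?_⟩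
  · by_contra! he
    have : y ^ orderOf y ∈ H := by rw [pow_orderOf_eq_one]; exact H.one_mem
    rw [odd_pow_mem_iff_of_index_two hH (by simpa [hyr, Nat.lt_one_iff.mp he] using hr)] at this
    exact hy this
  · rw [orderOf_pow_of_dvd hr.pos.ne' (hyr ▸ dvd_mul_left r _), hyr, Nat.mul_div_cancel _ hr.pos]

theorem sup_closure_eq_top_of_index_two (hH : H.index = 2) {L : Subgroup G} (hx : x ∉ H)
    (hHL : H ≤ L ⊔ closure {x}) : L ⊔ closure {x} = ⊤ := by
  refine eq_top_iff.mpr fun g _ => ?_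
  by_cases hg : g ∈ H
  · exact hHL hg
  · have hgx : g * x ∈ H := (mul_mem_iff_of_index_two hH).mpr (iff_of_false hg hx)
    rw [← mul_inv_cancel_right g x]
    exact mul_mem (hHL hgx) (mem_sup_right (inv_mem (mem_closure_singleton_self x)))

theorem inf_closure_eq_bot_of_orderOf_eq_two (hx : x ∉ H) (hx2 : orderOf x = 2) :
    H ⊓ closure {x} = ⊥ := by
  refine eq_bot_iff.mpr fun g hg => ?_
  obtain ⟨hgH, hgx⟩ := mem_inf.mp hg
  obtain ⟨k, rfl⟩ := mem_closure_singleton.mp hgx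
  have hxx : x ^ (2 : ℤ) = 1 := by rw [zpow_two, ← pow_two, ← hx2, pow_orderOf_eq_one]
  rcases Int.even_or_odd' k with ⟨j, rfl | rfl⟩
  · rw [_root_.zpow_mul, hxx, _root_.one_zpow]
    exact one_mem _
  · rw [_root_.zpow_add_one, _root_.zpow_mul, hxx, _root_.one_zpow, one_mul] at hgH
    exact absurd hgH hx

theorem card_eq_two_mul_of_index_two (hH : H.index = 2) (hG : Nat.card G = 4 * c) :
    Nat.card H = 2 * c := by
  have := H.card_mul_index
  rw [hH, hG] at this
  omega

section OrderFour

variable [IsMulCommutative H]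

theorem eq_one_or_eq_sq_of_sq_eq_one (hH : H.index = 2) (hx4 : orderOf x = 4)
    (hG : Nat.card G = 4 * c) (hc : Odd c) {t : G} (htH : t ∈ H) (ht2 : t ^ 2 = 1) :
    t = 1 ∨ t = x ^ 2 := by
  have : Finite G := Nat.finite_of_card_ne_zero (by have := hc.pos; omega)
  have hT : Nat.card (H.torsionBy 2) ∣ 2 := by
    obtain ⟨n, hn⟩ := IsPGroup.iff_card.mp
      fun g : H.torsionBy 2 => ⟨1, Subtype.ext (by simpa using g.2.2)⟩
    have h := card_dvd_of_le (torsionBy_le (H := H) (n := 2))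
    rw [hn, card_eq_two_mul_of_index_two hH hG] at h
    rw [hn]
    exact (Nat.Coprime.pow_left n hc.coprime_two_left).dvd_of_dvd_mul_right h
  have hx2 : x ^ 2 ≠ 1 := pow_ne_one_of_lt_orderOf two_ne_zero (by omega)
  refine or_iff_not_imp_left.mpr fun ht1 => eq_of_ne_one_of_card_dvd_two hT ⟨htH, ht2⟩ ?_ ht1 hx2
  refine ⟨sq_mem_of_index_two hH x, ?_⟩
  rw [← pow_mul, ← pow_orderOf_eq_one x, hx4]

theorem le_torsionBy_sup_closure (hH : H.index = 2) (hx4 : orderOf x = 4)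
    (hG : Nat.card G = 4 * c) (hc : Odd c) : H ≤ H.torsionBy c ⊔ closure {x} := by
  intro a ha
  have ha2c : a ^ (2 * c) = 1 := by
    rw [← card_eq_two_mul_of_index_two hH hG]
    exact orderOf_dvd_iff_pow_eq_one.mp (H.orderOf_dvd_natCard ha)
  obtain ⟨w, rfl⟩ := hc
  have hsucc : a ^ (2 * w + 1 + 1) ∈ H.torsionBy (2 * w + 1) := by
    refine ⟨pow_mem ha _, ?_⟩
    rw [← pow_mul, show (2 * w + 1 + 1) * (2 * w + 1) = 2 * (2 * w + 1) * (w + 1) by ring,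
      pow_mul, ha2c, one_pow]
  have hinvol : a ^ (2 * w + 1) = 1 ∨ a ^ (2 * w + 1) = x ^ 2 :=
    eq_one_or_eq_sq_of_sq_eq_one hH hx4 hG ⟨w, rfl⟩ (pow_mem ha _)
      (by rw [← pow_mul, mul_comm, ha2c])
  rw [← mul_inv_cancel_right a (a ^ (2 * w + 1)), ← pow_succ']
  refine mul_mem (mem_sup_left hsucc) (mem_sup_right (inv_mem ?_))
  rcases hinvol with h | h <;> rw [h]
  · exact one_mem _
  · exact pow_mem (mem_closure_singleton_self x) 2

theorem torsionBy_inf_closure_eq_bot (hx4 : orderOf x = 4) (hc : Odd c) :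
    H.torsionBy c ⊓ closure {x} = ⊥ := by
  refine eq_bot_iff.mpr fun g hg => ?_
  obtain ⟨⟨-, hgc⟩, hgx⟩ := mem_inf.mp hg
  rw [← zpowers_eq_closure] at hgx
  have hg4 : g ^ 4 = 1 := orderOf_dvd_iff_pow_eq_one.mp (hx4 ▸ orderOf_dvd_of_mem_zpowers hgx)
  have hcop : c.gcd 4 = 1 := Nat.Coprime.pow_right 2 hc.coprime_two_right
  simpa [hcop] using pow_gcd_eq_one.mpr ⟨hgc, hg4⟩

theorem exists_normal_sup_closure_eq_top_of_index_two_of_cubeFree (hH : H.index = 2)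
    (hG : CubeFree (Nat.card G)) :
    ∃ (L : Subgroup G) (x : G), L.Normal ∧ L ≤ H ∧ x ∉ H ∧ (orderOf x = 2 ∨ orderOf x = 4) ∧
      L ⊔ closure {x} = ⊤ ∧ L ⊓ closure {x} = ⊥ := by
  have : Finite G := Nat.finite_of_card_ne_zero fun h => hG 2 Nat.prime_two (h ▸ dvd_zero _)
  have : H.Normal := normal_of_index_eq_two hH
  obtain ⟨x, hx, e, he1, hxe⟩ := exists_notMem_orderOf_eq_two_pow_of_index_two hH
  have hxG : 2 ^ e ∣ Nat.card G := hxe ▸ _root_.orderOf_dvd_natCard x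
  have he2 : e ≤ 2 := by
    by_contra! he
    exact hG 2 Nat.prime_two ((pow_dvd_pow 2 he).trans hxG)
  interval_cases e
  · exact ⟨H, x, ‹_›, le_rfl, hx, .inl hxe, sup_closure_eq_top_of_index_two hH hx le_sup_left,
      inf_closure_eq_bot_of_orderOf_eq_two hx hxe⟩
  · obtain ⟨c, hc⟩ := hxG
    have hc_odd : Odd c := by
      refine Nat.not_even_iff_odd.mp fun ⟨d, hd⟩ => hG 2 Nat.prime_two ⟨d, ?_⟩
      rw [hc, hd]
      ring
    exact ⟨H.torsionBy c, x, inferInstance, torsionBy_le, hx, .inr hxe,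
      sup_closure_eq_top_of_index_two hH hx (le_torsionBy_sup_closure hH hxe hc hc_odd),
      torsionBy_inf_closure_eq_bot hxe hc_odd⟩

end OrderFour

end Subgroup

section Monomial

variable {F : Type} [Field F]

instance isMulCommutative_Dsub : IsMulCommutative (Dsub F) :=
  ⟨⟨fun ⟨g, g01, g10⟩ ⟨h, h01, h10⟩ => by
    ext i j
    fin_cases i <;> fin_cases j <;>
      simp [Units.val_mul, Matrix.mul_apply, Fin.sum_univ_two, g01, g10, h01, h10, mul_comm]⟩⟩

theorem reducible_of_le_Dsub {K : Subgroup (GL (Fin 2) F)} (hK : K ≤ Dsub F) : Reducible F K := by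
  set W := LinearMap.ker (LinearMap.proj (R := F) (φ := fun _ : Fin 2 => F) 1)
  have h0 : (Pi.single 0 1 : Fin 2 → F) ∈ W := by simp [W]
  have h1 : (Pi.single 1 1 : Fin 2 → F) ∉ W := by simp [W]
  refine ⟨W, fun hbot => ?_, fun htop => h1 (htop ▸ Submodule.mem_top), fun g hg v hv => ?_⟩
  · rw [hbot, Submodule.mem_bot] at h0
    simpa using congrFun h0 0
  · obtain ⟨-, g10⟩ := hK hg
    simp_all [W]

theorem index_Dsub_subgroupOf_eq_two {K : Subgroup (GL (Fin 2) F)} (hKM : K ≤ Msub F)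
    (hK : ¬ Reducible F K) : ((Dsub F).subgroupOf K).index = 2 := by
  obtain ⟨y, hyK, hyD⟩ : ∃ y ∈ K, y ∉ Dsub F := by
    by_contra! h
    exact hK (reducible_of_le_Dsub h)
  refine Subgroup.index_eq_two_iff_exists_notMem_and.mpr ⟨⟨y, hyK⟩, hyD, fun k => ?_⟩
  simp only [Subgroup.mem_subgroupOf, Subgroup.coe_mul]
  refine or_iff_not_imp_right.mpr fun hkD => ?_
  exact ((hKM k.2).resolve_left hkD).mul_anti ((hKM hyK).resolve_left hyD)

end Monomial

theorem imprimitive_monomial_decomposition_general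
    (F : Type) [Field F]
    (K : Subgroup (GL (Fin 2) F)) (hKM : K ≤ Msub F) (himp : Imprimitive F K)
    (m : ℕ) (hm : Nat.card ↥K = m) (hcf : CubeFree m) :
    ∃ (L : Subgroup (GL (Fin 2) F)) (x : GL (Fin 2) F),
      L ≤ K ∧ L ≤ Dsub F ∧ (∀ k ∈ K, ∀ l ∈ L, k * l * k⁻¹ ∈ L) ∧
      x ∈ K ∧ x ∉ Dsub F ∧ (orderOf x = 2 ∨ orderOf x = 4) ∧
      L ⊔ Subgroup.closure {x} = K ∧ L ⊓ Subgroup.closure {x} = ⊥ := by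
  obtain ⟨L, x, hLn, hLD, hxD, hxo, hsup, hinf⟩ :=
    Subgroup.exists_normal_sup_closure_eq_top_of_index_two_of_cubeFree
      (index_Dsub_subgroupOf_eq_two hKM himp.1) (hm ▸ hcf)
  have hclosure : Subgroup.closure {(x : GL (Fin 2) F)} = (Subgroup.closure {x}).map K.subtype := by
    rw [MonoidHom.map_closure, Set.image_singleton, Subgroup.coe_subtype]
  refine ⟨L.map K.subtype, x, Subgroup.map_subtype_le L, ?_, ?_, x.2,
    fun h => hxD (Subgroup.mem_subgroupOf.mpr h), by rwa [Subgroup.orderOf_coe], ?_, ?_⟩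
  · rintro _ ⟨l, hl, rfl⟩
    exact Subgroup.mem_subgroupOf.mp (hLD hl)
  · rintro k hk _ ⟨l, hl, rfl⟩
    exact ⟨⟨k, hk⟩ * l * ⟨k, hk⟩⁻¹, hLn.conj_mem l hl _, by simp⟩
  · rw [hclosure, ← Subgroup.map_sup, hsup, ← MonoidHom.range_eq_map, Subgroup.range_subtype]
  · rw [hclosure, ← Subgroup.map_inf_eq _ _ _ K.subtype_injective, hinf, Subgroup.map_bot]

/-- An imprimitive subgroup `K ≤ M(2,q)` of cube-free order coprime to `p` decomposes as
`K = L ⋊ ⟨x⟩` with `L ≤ D(2,q)` normal in `K` and `x ∈ K ∖ D(2,q)` of order 2 or 4. -/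
theorem imprimitive_monomial_decomposition
    (p k₀ : ℕ) (hp : p.Prime) (hk₀ : 1 ≤ k₀)
    (F : Type) [Field F] [Fintype F] (hF : Fintype.card F = p ^ k₀)
    (K : Subgroup (GL (Fin 2) F)) (hKM : K ≤ Msub F) (himp : Imprimitive F K)
    (m : ℕ) (hm : Nat.card ↥K = m) (hcf : CubeFree m) (hpm : ¬ p ∣ m) :
    ∃ (L : Subgroup (GL (Fin 2) F)) (x : GL (Fin 2) F),
      L ≤ K ∧ L ≤ Dsub F ∧ (∀ k ∈ K, ∀ l ∈ L, k * l * k⁻¹ ∈ L) ∧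
      x ∈ K ∧ x ∉ Dsub F ∧ (orderOf x = 2 ∨ orderOf x = 4) ∧
      L ⊔ Subgroup.closure {x} = K ∧ L ⊓ Subgroup.closure {x} = ⊥ :=
  imprimitive_monomial_decomposition_general F K hKM himp m hm hcf
end

section
/- Let g and h be two elements of the coset D(2,q)a (i.e., g and h are invertible anti-diagonal 2×2 matrices over F), and suppose both g and h have order 2. Then there exists a diagonal matrix d ∈ D(2,q) such that d g d⁻¹ = h. Consequently the elements of order 2 in D(2,q)a form a single conjugacy class in M(2,q). -/
open Matrix

/-! An anti-diagonal matrix `[[0, b], [c, 0]]` squares to `b c • 1`, so order 2 forces `c = b⁻¹`.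
Conjugating `[[0, b], [b⁻¹, 0]]` by `diag(t, 1)` gives `[[0, t b], [(t b)⁻¹, 0]]`, and
`t = b' / b` carries the involution with upper right entry `b` to the one with entry `b'`. -/

lemma mul_self_eq_one_of_orderOf_eq_two {M : Type*} [Monoid M] {x : M} (hx : orderOf x = 2) :
    x * x = 1 := by
  rw [← sq, ← hx, pow_orderOf_eq_one]

section Monomial
variable {F : Type} [Field F]

lemma IsAnti2.exists_eq_of_mul_self_eq_one {A : Matrix (Fin 2) (Fin 2) F} (hA : IsAnti2 A)
    (h : A * A = 1) : ∃ b ≠ 0, A = !![0, b; b⁻¹, 0] := by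
  have hprod : A 0 1 * A 1 0 = 1 := by
    simpa [mul_apply, Fin.sum_univ_two, hA.1, hA.2] using congrFun (congrFun h 0) 0
  refine ⟨A 0 1, left_ne_zero_of_mul_eq_one hprod, ?_⟩
  ext i j
  fin_cases i <;> fin_cases j <;> simp [hA.1, hA.2, eq_inv_of_mul_eq_one_right hprod]

lemma diagonal_mul_antidiag_mul_diagonal (t b : F) :
    diagonal ![t, 1] * !![0, b; b⁻¹, 0] * diagonal ![t⁻¹, 1] = !![0, t * b; (t * b)⁻¹, 0] := by
  ext i j
  fin_cases i <;> fin_cases j <;> simp [mul_apply, Fin.sum_univ_two, mul_comm]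

def diagUnit (t : Fˣ) : GL (Fin 2) F :=
  ⟨diagonal ![(t : F), 1], diagonal ![(t⁻¹ : Fˣ), 1],
    by ext i j; fin_cases i <;> fin_cases j <;> simp,
    by ext i j; fin_cases i <;> fin_cases j <;> simp⟩

lemma diagUnit_mem_Dsub (t : Fˣ) : diagUnit t ∈ Dsub F :=
  ⟨rfl, rfl⟩

end Monomial

theorem antidiag_order_two_conjugate_general
    (F : Type) [Field F]
    (g h : GL (Fin 2) F)
    (hg : IsAnti2 (g : Matrix (Fin 2) (Fin 2) F))
    (hh : IsAnti2 (h : Matrix (Fin 2) (Fin 2) F))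
    (hog : orderOf g = 2) (hoh : orderOf h = 2) :
    ∃ d : GL (Fin 2) F, d ∈ Dsub F ∧ d * g * d⁻¹ = h := by
  obtain ⟨b, hb, hgb⟩ :=
    hg.exists_eq_of_mul_self_eq_one (mul_self_eq_one_of_orderOf_eq_two (orderOf_units.trans hog))
  obtain ⟨c, hc, hhc⟩ :=
    hh.exists_eq_of_mul_self_eq_one (mul_self_eq_one_of_orderOf_eq_two (orderOf_units.trans hoh))
  refine ⟨diagUnit (Units.mk0 (c / b) (div_ne_zero hc hb)), diagUnit_mem_Dsub _, Units.ext ?_⟩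
  show diagonal ![c / b, 1] * (g : Matrix (Fin 2) (Fin 2) F) * diagonal ![(c / b)⁻¹, 1] = h
  rw [hgb, hhc, diagonal_mul_antidiag_mul_diagonal, div_mul_cancel₀ c hb]

/-- Any two elements of order 2 in the coset `D(2,q)a` (the invertible anti-diagonal
matrices) are conjugate by an element of `D(2,q)`; hence they form a single conjugacy
class in `M(2,q)`. -/
theorem antidiag_order_two_conjugate
    (p k₀ : ℕ) (hp : p.Prime) (hk₀ : 1 ≤ k₀)
    (F : Type) [Field F] [Fintype F] (hF : Fintype.card F = p ^ k₀)
    (g h : GL (Fin 2) F)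
    (hg : IsAnti2 (g : Matrix (Fin 2) (Fin 2) F))
    (hh : IsAnti2 (h : Matrix (Fin 2) (Fin 2) F))
    (hog : orderOf g = 2) (hoh : orderOf h = 2) :
    ∃ d : GL (Fin 2) F, d ∈ Dsub F ∧ d * g * d⁻¹ = h :=
  antidiag_order_two_conjugate_general F g h hg hh hog hoh
end

section
/- Let g and h be two elements of the coset D(2,q)a (i.e., g and h are invertible anti-diagonal 2×2 matrices over F), and suppose both g and h have order 4. Then there exists a diagonal matrix d ∈ D(2,q) such that d g d⁻¹ = h. Consequently the elements of order 4 in D(2,q)a form a single conjugacy class in M(2,q). -/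
open Matrix

lemma anti_order_four_prod {F : Type} [Field F] (g : GL (Fin 2) F)
    (hg : IsAnti2 (g : Matrix (Fin 2) (Fin 2) F)) (hog : orderOf g = 4) :
    (g : Matrix (Fin 2) (Fin 2) F) 0 1 * (g : Matrix (Fin 2) (Fin 2) F) 1 0 = -1 := by
  set A := (g : Matrix (Fin 2) (Fin 2) F) with hA
  obtain ⟨h00, h11⟩ := hg
  set c : F := A 0 1 * A 1 0 with hc
  have hsq : A * A = c • (1 : Matrix (Fin 2) (Fin 2) F) := by
    ext i j
    fin_cases i <;> fin_cases j <;>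
      simp [Matrix.mul_apply, Fin.sum_univ_two, h00, h11, Matrix.one_apply, hc, mul_comm]
  have h4 : g ^ 4 = 1 := by rw [← hog]; exact pow_orderOf_eq_one g
  have h2 : A ^ 4 = 1 := by
    rw [hA, ← Units.val_pow_eq_pow_val, h4, Units.val_one]
  have hA4 : A * A * (A * A) = 1 := by
    rw [← mul_assoc, ← pow_two, ← pow_succ, ← pow_succ]
    exact h2
  rw [hsq, Matrix.smul_mul, Matrix.mul_smul, smul_smul, Matrix.mul_one] at hA4
  have hcc : c * c = 1 := by
    have := congrFun (congrFun hA4 0) 0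
    simpa [Matrix.one_apply] using this
  rcases mul_self_eq_one_iff.mp hcc with h1 | h1
  · exfalso
    have hg2 : g ^ 2 = 1 := by
      apply Units.ext
      have : ((g ^ 2 : GL (Fin 2) F) : Matrix (Fin 2) (Fin 2) F) = A * A := by
        rw [Units.val_pow_eq_pow_val, pow_two, hA]
      rw [this, hsq, h1, one_smul]; rfl
    have := orderOf_dvd_of_pow_eq_one hg2
    rw [hog] at this
    omega
  · exact h1

/-- Any two elements of order 4 in the coset `D(2,q)a` (the invertible anti-diagonal
matrices) are conjugate by an element of `D(2,q)`; hence they form a single conjugacy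
class in `M(2,q)`. -/
theorem antidiag_order_four_conjugate
    (p k₀ : ℕ) (hp : p.Prime) (hk₀ : 1 ≤ k₀)
    (F : Type) [Field F] [Fintype F] (hF : Fintype.card F = p ^ k₀)
    (g h : GL (Fin 2) F)
    (hg : IsAnti2 (g : Matrix (Fin 2) (Fin 2) F))
    (hh : IsAnti2 (h : Matrix (Fin 2) (Fin 2) F))
    (hog : orderOf g = 4) (hoh : orderOf h = 4) :
    ∃ d : GL (Fin 2) F, d ∈ Dsub F ∧ d * g * d⁻¹ = h := by
  obtain ⟨hg00, hg11⟩ := id hg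
  obtain ⟨hh00, hh11⟩ := id hh
  have hgp := anti_order_four_prod g hg hog
  have hhp := anti_order_four_prod h hh hoh
  set A := (g : Matrix (Fin 2) (Fin 2) F) with hA
  set B := (h : Matrix (Fin 2) (Fin 2) F) with hB
  have hb : A 0 1 ≠ 0 := by
    intro h0; rw [h0, zero_mul] at hgp; exact one_ne_zero (neg_eq_zero.mp hgp.symm)
  have hb' : B 0 1 ≠ 0 := by
    intro h0; rw [h0, zero_mul] at hhp; exact one_ne_zero (neg_eq_zero.mp hhp.symm)
  set s : F := B 0 1 / A 0 1 with hs
  have hs0 : s ≠ 0 := div_ne_zero hb' hb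
  refine ⟨⟨!![s, 0; 0, 1], !![s⁻¹, 0; 0, 1], ?_, ?_⟩, ?_, ?_⟩
  · ext i j
    fin_cases i <;> fin_cases j <;>
      simp [Matrix.mul_apply, Fin.sum_univ_two, Matrix.one_apply, mul_inv_cancel₀ hs0]
  · ext i j
    fin_cases i <;> fin_cases j <;>
      simp [Matrix.mul_apply, Fin.sum_univ_two, Matrix.one_apply, inv_mul_cancel₀ hs0]
  · constructor <;> simp
  · rw [mul_inv_eq_iff_eq_mul]
    apply Units.ext
    show (_ * _ : Matrix (Fin 2) (Fin 2) F) = (_ * _ : Matrix (Fin 2) (Fin 2) F)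
    push_cast
    ext i j
    fin_cases i <;> fin_cases j <;>
      simp [Matrix.mul_apply, Fin.sum_univ_two, ← hA, ← hB, hg00, hg11, hh00, hh11]
    · rw [hs]; exact div_mul_cancel₀ _ hb
    · rw [hs]
      field_simp
      have e1 : A 1 0 = -1 / A 0 1 := by field_simp; linear_combination hgp
      have e2 : B 1 0 = -1 / B 0 1 := by field_simp; linear_combination hhp
      rw [e1, e2]
      field_simp
end

section
/- For i = 1, 2, let Hᵢ ≤ M(2,q) be an imprimitive subgroup of cube-free order with p ∤ |Hᵢ|, of the form Hᵢ = Lᵢ ⋊ Pᵢ, where Lᵢ ≤ D(2,q) is normal in Hᵢ, Pᵢ = ⟨xᵢ⟩ is cyclic of order 2 or 4 generated by an element xᵢ ∈ M(2,q) ∖ D(2,q), and Lᵢ ∩ Pᵢ is trivial with Hᵢ generated by Lᵢ and xᵢ. Then H₁ and H₂ are isomorphic as abstract groups if and only if L₁ = L₂ and P₁ and P₂ have the same order. -/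
open Matrix

namespace CFaux
variable {F : Type} [Field F]

lemma det_ne_zero (g : GL (Fin 2) F) : ((g : Matrix (Fin 2) (Fin 2) F)).det ≠ 0 := by
  have : IsUnit (g : Matrix (Fin 2) (Fin 2) F) := ⟨g, rfl⟩
  exact ((Matrix.isUnit_iff_isUnit_det _).mp this).ne_zero

lemma diag_entries_ne {g : GL (Fin 2) F} (h : IsDiag2 (g : Matrix (Fin 2) (Fin 2) F)) :
    (g : Matrix (Fin 2) (Fin 2) F) 0 0 ≠ 0 ∧ (g : Matrix (Fin 2) (Fin 2) F) 1 1 ≠ 0 := by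
  have hd := det_ne_zero g
  rw [Matrix.det_fin_two, h.1, h.2] at hd
  simp only [zero_mul, mul_zero, sub_zero] at hd
  exact ⟨left_ne_zero_of_mul hd, right_ne_zero_of_mul hd⟩

lemma anti_entries_ne {g : GL (Fin 2) F} (h : IsAnti2 (g : Matrix (Fin 2) (Fin 2) F)) :
    (g : Matrix (Fin 2) (Fin 2) F) 0 1 ≠ 0 ∧ (g : Matrix (Fin 2) (Fin 2) F) 1 0 ≠ 0 := by
  have hd := det_ne_zero g
  rw [Matrix.det_fin_two, h.1, h.2] at hd
  simp only [zero_mul, mul_zero, zero_sub, neg_ne_zero] at hd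
  exact ⟨left_ne_zero_of_mul hd, right_ne_zero_of_mul hd⟩

lemma not_diag_anti {g : GL (Fin 2) F} (h : IsDiag2 (g : Matrix (Fin 2) (Fin 2) F)) :
    ¬ IsAnti2 (g : Matrix (Fin 2) (Fin 2) F) := fun h' => (diag_entries_ne h).1 h'.1

lemma gl_ext {g h : GL (Fin 2) F}
    (H : (g : Matrix (Fin 2) (Fin 2) F) = (h : Matrix (Fin 2) (Fin 2) F)) : g = h :=
  Units.ext H

lemma mul_entry (g h : GL (Fin 2) F) (i j : Fin 2) :
    ((g * h : GL (Fin 2) F) : Matrix (Fin 2) (Fin 2) F) i j =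
      (g : Matrix (Fin 2) (Fin 2) F) i 0 * (h : Matrix (Fin 2) (Fin 2) F) 0 j +
      (g : Matrix (Fin 2) (Fin 2) F) i 1 * (h : Matrix (Fin 2) (Fin 2) F) 1 j := by
  simp [Units.val_mul, Matrix.mul_apply, Fin.sum_univ_two]

/-- determinant as a group hom to units -/
abbrev gdet : GL (Fin 2) F →* Fˣ := Units.map (Matrix.detMonoidHom)

lemma gdet_val (g : GL (Fin 2) F) : (gdet g : F) = ((g : Matrix (Fin 2) (Fin 2) F)).det := rfl


-- conjugation of a diagonal by an antidiagonal swaps the diagonal entries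
lemma conj_anti_diag {g d : GL (Fin 2) F} (hg : IsAnti2 (g : Matrix (Fin 2) (Fin 2) F))
    (hd : IsDiag2 (d : Matrix (Fin 2) (Fin 2) F)) :
    IsDiag2 ((g * d * g⁻¹ : GL (Fin 2) F) : Matrix (Fin 2) (Fin 2) F) ∧
    ((g * d * g⁻¹ : GL (Fin 2) F) : Matrix (Fin 2) (Fin 2) F) 0 0
      = (d : Matrix (Fin 2) (Fin 2) F) 1 1 ∧
    ((g * d * g⁻¹ : GL (Fin 2) F) : Matrix (Fin 2) (Fin 2) F) 1 1
      = (d : Matrix (Fin 2) (Fin 2) F) 0 0 := by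
  obtain ⟨hb, hc⟩ := anti_entries_ne hg
  have key : ((g * d * g⁻¹) * g : GL (Fin 2) F) = g * d := by group
  have key' : ((g * d * g⁻¹ : GL (Fin 2) F) : Matrix (Fin 2) (Fin 2) F)
      * (g : Matrix (Fin 2) (Fin 2) F) = (g : Matrix (Fin 2) (Fin 2) F) * d :=
    calc ((g * d * g⁻¹ : GL (Fin 2) F) : Matrix (Fin 2) (Fin 2) F) * (g : Matrix (Fin 2) (Fin 2) F)
        = (((g * d * g⁻¹) * g : GL (Fin 2) F) : Matrix (Fin 2) (Fin 2) F) := (Units.val_mul _ _).symm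
      _ = ((g * d : GL (Fin 2) F) : Matrix (Fin 2) (Fin 2) F) := by rw [key]
      _ = (g : Matrix (Fin 2) (Fin 2) F) * d := Units.val_mul _ _
  have e00 := congrFun (congrFun key' 0) 0
  have e01 := congrFun (congrFun key' 0) 1
  have e10 := congrFun (congrFun key' 1) 0
  have e11 := congrFun (congrFun key' 1) 1
  simp only [Matrix.mul_apply, Fin.sum_univ_two, hg.1, hg.2, hd.1, hd.2,
    zero_mul, mul_zero, add_zero, zero_add] at e00 e01 e10 e11
  refine ⟨⟨?_, ?_⟩, ?_, ?_⟩
  · exact (mul_eq_zero.mp e00).resolve_right hc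
  · exact (mul_eq_zero.mp e11).resolve_right hb
  · exact mul_right_cancel₀ hb (e01.trans (mul_comm _ _))
  · exact mul_right_cancel₀ hc (e10.trans (mul_comm _ _))

lemma inv_anti {g : GL (Fin 2) F} (hg : IsAnti2 (g : Matrix (Fin 2) (Fin 2) F)) :
    IsAnti2 ((g⁻¹ : GL (Fin 2) F) : Matrix (Fin 2) (Fin 2) F) := by
  obtain ⟨hb, hc⟩ := anti_entries_ne hg
  have key : ((g⁻¹ : GL (Fin 2) F) : Matrix (Fin 2) (Fin 2) F)
      * (g : Matrix (Fin 2) (Fin 2) F) = 1 :=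
    calc ((g⁻¹ : GL (Fin 2) F) : Matrix (Fin 2) (Fin 2) F) * (g : Matrix (Fin 2) (Fin 2) F)
        = ((g⁻¹ * g : GL (Fin 2) F) : Matrix (Fin 2) (Fin 2) F) := (Units.val_mul _ _).symm
      _ = 1 := by rw [inv_mul_cancel g]; rfl
  have e01 := congrFun (congrFun key 0) 1
  have e10 := congrFun (congrFun key 1) 0
  simp only [Matrix.mul_apply, Fin.sum_univ_two, hg.1, hg.2, Matrix.one_apply,
    zero_mul, mul_zero, add_zero, zero_add] at e01 e10
  norm_num at e01 e10
  rw [show ((g⁻¹ : GL (Fin 2) F) : Matrix (Fin 2) (Fin 2) F) = ((g : Matrix (Fin 2) (Fin 2) F))⁻¹ from Matrix.coe_units_inv g]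
  exact ⟨e01.resolve_right hb, e10.resolve_right hc⟩

lemma inv_diag {g : GL (Fin 2) F} (hg : IsDiag2 (g : Matrix (Fin 2) (Fin 2) F)) :
    IsDiag2 ((g⁻¹ : GL (Fin 2) F) : Matrix (Fin 2) (Fin 2) F) := by
  obtain ⟨hb, hc⟩ := diag_entries_ne hg
  have key : ((g⁻¹ : GL (Fin 2) F) : Matrix (Fin 2) (Fin 2) F)
      * (g : Matrix (Fin 2) (Fin 2) F) = 1 :=
    calc ((g⁻¹ : GL (Fin 2) F) : Matrix (Fin 2) (Fin 2) F) * (g : Matrix (Fin 2) (Fin 2) F)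
        = ((g⁻¹ * g : GL (Fin 2) F) : Matrix (Fin 2) (Fin 2) F) := (Units.val_mul _ _).symm
      _ = 1 := by rw [inv_mul_cancel g]; rfl
  have e01 := congrFun (congrFun key 0) 1
  have e10 := congrFun (congrFun key 1) 0
  simp only [Matrix.mul_apply, Fin.sum_univ_two, hg.1, hg.2, Matrix.one_apply,
    zero_mul, mul_zero, add_zero, zero_add] at e01 e10
  norm_num at e01 e10
  rw [show ((g⁻¹ : GL (Fin 2) F) : Matrix (Fin 2) (Fin 2) F) = ((g : Matrix (Fin 2) (Fin 2) F))⁻¹ from Matrix.coe_units_inv g]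
  exact ⟨e01.resolve_right hc, e10.resolve_right hb⟩

-- diagonal elements commute
lemma diag_comm {g h : GL (Fin 2) F} (hg : IsDiag2 (g : Matrix (Fin 2) (Fin 2) F))
    (hh : IsDiag2 (h : Matrix (Fin 2) (Fin 2) F)) : g * h = h * g := by
  apply gl_ext
  ext i j
  fin_cases i <;> fin_cases j <;>
    simp [mul_entry, hg.1, hg.2, hh.1, hh.2, mul_comm]

-- scalar elements are central
lemma scalar_comm {g : GL (Fin 2) F} (hg : IsDiag2 (g : Matrix (Fin 2) (Fin 2) F))
    (hs : (g : Matrix (Fin 2) (Fin 2) F) 0 0 = (g : Matrix (Fin 2) (Fin 2) F) 1 1)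
    (h : GL (Fin 2) F) : g * h = h * g := by
  apply gl_ext
  ext i j
  fin_cases i <;> fin_cases j <;>
    simp [mul_entry, hg.1, hg.2, ← hs, mul_comm]

lemma diag_pow {g : GL (Fin 2) F} (hg : IsDiag2 (g : Matrix (Fin 2) (Fin 2) F)) (k : ℕ) :
    IsDiag2 ((g ^ k : GL (Fin 2) F) : Matrix (Fin 2) (Fin 2) F) ∧
    ((g ^ k : GL (Fin 2) F) : Matrix (Fin 2) (Fin 2) F) 0 0
      = ((g : Matrix (Fin 2) (Fin 2) F) 0 0) ^ k ∧
    ((g ^ k : GL (Fin 2) F) : Matrix (Fin 2) (Fin 2) F) 1 1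
      = ((g : Matrix (Fin 2) (Fin 2) F) 1 1) ^ k := by
  induction k with
  | zero => refine ⟨⟨?_, ?_⟩, ?_, ?_⟩ <;> simp [Matrix.one_apply]
  | succ k ih =>
    obtain ⟨⟨h01, h10⟩, h00, h11⟩ := ih
    have hmul : (g ^ (k+1) : GL (Fin 2) F) = g ^ k * g := by rw [pow_succ]
    rw [hmul]
    refine ⟨⟨?_, ?_⟩, ?_, ?_⟩ <;>
      simp [mul_entry, h01, h10, h00, h11, hg.1, hg.2, pow_succ]

lemma anti_sq {x : GL (Fin 2) F} (hx : IsAnti2 (x : Matrix (Fin 2) (Fin 2) F)) :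
    IsDiag2 ((x ^ 2 : GL (Fin 2) F) : Matrix (Fin 2) (Fin 2) F) ∧
    ((x ^ 2 : GL (Fin 2) F) : Matrix (Fin 2) (Fin 2) F) 0 0
      = (x : Matrix (Fin 2) (Fin 2) F) 0 1 * (x : Matrix (Fin 2) (Fin 2) F) 1 0 ∧
    ((x ^ 2 : GL (Fin 2) F) : Matrix (Fin 2) (Fin 2) F) 1 1
      = (x : Matrix (Fin 2) (Fin 2) F) 0 1 * (x : Matrix (Fin 2) (Fin 2) F) 1 0 := by
  have hmul : (x ^ 2 : GL (Fin 2) F) = x * x := sq x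
  rw [hmul]
  refine ⟨⟨?_, ?_⟩, ?_, ?_⟩ <;> simp [mul_entry, hx.1, hx.2, mul_comm]

lemma inv_diag_entries {g : GL (Fin 2) F} (hg : IsDiag2 (g : Matrix (Fin 2) (Fin 2) F)) :
    ((g⁻¹ : GL (Fin 2) F) : Matrix (Fin 2) (Fin 2) F) 0 0 * (g : Matrix (Fin 2) (Fin 2) F) 0 0 = 1 ∧
    ((g⁻¹ : GL (Fin 2) F) : Matrix (Fin 2) (Fin 2) F) 1 1 * (g : Matrix (Fin 2) (Fin 2) F) 1 1 = 1 := by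
  have hi := inv_diag hg
  have key : ((g⁻¹ * g : GL (Fin 2) F) : Matrix (Fin 2) (Fin 2) F) = 1 := by
    rw [inv_mul_cancel g]; rfl
  have e00 : ((g⁻¹ * g : GL (Fin 2) F) : Matrix (Fin 2) (Fin 2) F) 0 0 = 1 := by
    rw [key]; simp
  have e11 : ((g⁻¹ * g : GL (Fin 2) F) : Matrix (Fin 2) (Fin 2) F) 1 1 = 1 := by
    rw [key]; simp
  rw [mul_entry] at e00 e11
  rw [hi.1, hg.2] at e00
  rw [hi.2, hg.1] at e11
  constructor
  · simpa using e00
  · simpa using e11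

/-- the subgroup of scalar matrices -/
def Sc (F : Type) [Field F] : Subgroup (GL (Fin 2) F) where
  carrier := {g | IsDiag2 (g : Matrix (Fin 2) (Fin 2) F) ∧
    (g : Matrix (Fin 2) (Fin 2) F) 0 0 = (g : Matrix (Fin 2) (Fin 2) F) 1 1}
  one_mem' := ⟨⟨by simp, by simp⟩, by simp⟩
  mul_mem' := by
    rintro a b ⟨ha, ha'⟩ ⟨hb, hb'⟩
    refine ⟨⟨?_, ?_⟩, ?_⟩ <;> simp [mul_entry, ha.1, ha.2, hb.1, hb.2, ha', hb']
  inv_mem' := by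
    rintro g ⟨hg, hg'⟩
    refine ⟨inv_diag hg, ?_⟩
    obtain ⟨e00, e11⟩ := inv_diag_entries hg
    rw [hg'] at e00
    have h11 := (diag_entries_ne hg).2
    exact mul_right_cancel₀ h11 (e00.trans e11.symm)

/-- the subgroup of diagonal matrices of determinant 1 -/
def Ac (F : Type) [Field F] : Subgroup (GL (Fin 2) F) where
  carrier := {g | IsDiag2 (g : Matrix (Fin 2) (Fin 2) F) ∧
    (g : Matrix (Fin 2) (Fin 2) F) 0 0 * (g : Matrix (Fin 2) (Fin 2) F) 1 1 = 1}
  one_mem' := ⟨⟨by simp, by simp⟩, by simp⟩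
  mul_mem' := by
    rintro a b ⟨ha, ha'⟩ ⟨hb, hb'⟩
    refine ⟨⟨?_, ?_⟩, ?_⟩ <;> simp [mul_entry, ha.1, ha.2, hb.1, hb.2]
    calc (a : Matrix (Fin 2) (Fin 2) F) 0 0 * (b : Matrix (Fin 2) (Fin 2) F) 0 0 *
        ((a : Matrix (Fin 2) (Fin 2) F) 1 1 * (b : Matrix (Fin 2) (Fin 2) F) 1 1)
        = ((a : Matrix (Fin 2) (Fin 2) F) 0 0 * (a : Matrix (Fin 2) (Fin 2) F) 1 1) *
          ((b : Matrix (Fin 2) (Fin 2) F) 0 0 * (b : Matrix (Fin 2) (Fin 2) F) 1 1) := by ring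
      _ = 1 := by rw [ha', hb', one_mul]
  inv_mem' := by
    rintro g ⟨hg, hg'⟩
    refine ⟨inv_diag hg, ?_⟩
    obtain ⟨e00, e11⟩ := inv_diag_entries hg
    have : (((g⁻¹ : GL (Fin 2) F) : Matrix (Fin 2) (Fin 2) F) 0 0 *
        ((g⁻¹ : GL (Fin 2) F) : Matrix (Fin 2) (Fin 2) F) 1 1) *
        ((g : Matrix (Fin 2) (Fin 2) F) 0 0 * (g : Matrix (Fin 2) (Fin 2) F) 1 1) = 1 := by
      calc _ = (((g⁻¹ : GL (Fin 2) F) : Matrix (Fin 2) (Fin 2) F) 0 0 * (g : Matrix (Fin 2) (Fin 2) F) 0 0) *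
          (((g⁻¹ : GL (Fin 2) F) : Matrix (Fin 2) (Fin 2) F) 1 1 * (g : Matrix (Fin 2) (Fin 2) F) 1 1) := by ring
        _ = 1 := by rw [e00, e11, one_mul]
    rw [hg', mul_one] at this
    exact this

variable [Fintype F]

instance : Finite (GL (Fin 2) F) := by
  have : Finite (Matrix (Fin 2) (Fin 2) F) := by infer_instance
  infer_instance

/-- two subgroups contained in a "one-entry-determined" diagonal set with equal
cardinality are equal -/
lemma subgroup_eq_of_card_eq {T : Set (GL (Fin 2) F)}
    (hdiag : ∀ g ∈ T, IsDiag2 (g : Matrix (Fin 2) (Fin 2) F))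
    (hinj : ∀ g ∈ T, ∀ h ∈ T,
      (g : Matrix (Fin 2) (Fin 2) F) 0 0 = (h : Matrix (Fin 2) (Fin 2) F) 0 0 → g = h)
    {A B : Subgroup (GL (Fin 2) F)} (hA : (A : Set (GL (Fin 2) F)) ⊆ T)
    (hB : (B : Set (GL (Fin 2) F)) ⊆ T)
    (hcard : Nat.card A = Nat.card B) : A = B := by
  classical
  set d := Nat.card A with hd
  have hd0 : 0 < d := Nat.card_pos
  set W : Set F := {w | w ^ d = 1} with hW
  have hWcard : Nat.card W ≤ d := by
    have hsub : W ⊆ ((Polynomial.nthRoots d (1 : F)).toFinset : Set F) := by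
      intro w hw
      simp only [Finset.coe_sort_coe, Multiset.mem_toFinset, Finset.mem_coe]
      exact (Polynomial.mem_nthRoots hd0).mpr hw
    calc Nat.card W = W.ncard := Nat.card_coe_set_eq W
      _ ≤ ((Polynomial.nthRoots d (1 : F)).toFinset : Set F).ncard :=
          Set.ncard_le_ncard hsub (Set.toFinite _)
      _ = (Polynomial.nthRoots d (1 : F)).toFinset.card := Set.ncard_coe_finset _
      _ ≤ Multiset.card (Polynomial.nthRoots d (1 : F)) := Multiset.toFinset_card_le _
      _ ≤ d := Polynomial.card_nthRoots d 1
  have hpow : ∀ (C : Subgroup (GL (Fin 2) F)), (C : Set (GL (Fin 2) F)) ⊆ T →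
      Nat.card C = d → ∀ g ∈ C, ((g : Matrix (Fin 2) (Fin 2) F) 0 0) ^ d = 1 := by
    intro C hC hCd g hg
    have h1 : orderOf g ∣ d := hCd ▸ C.orderOf_dvd_natCard hg
    have h2 : g ^ d = 1 := orderOf_dvd_iff_pow_eq_one.mp h1
    have h3 := (diag_pow (hdiag g (hC hg)) d).2.1
    rw [h2] at h3
    simpa using h3.symm
  have hmap : ∀ (C : Subgroup (GL (Fin 2) F)), (C : Set (GL (Fin 2) F)) ⊆ T →
      Nat.card C = d → ∀ w ∈ W, ∃ g ∈ C, (g : Matrix (Fin 2) (Fin 2) F) 0 0 = w := by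
    intro C hC hCd
    let e : ↥C → ↥W := fun g => ⟨((g : GL (Fin 2) F) : Matrix (Fin 2) (Fin 2) F) 0 0,
      hpow C hC hCd g g.2⟩
    have einj : Function.Injective e := by
      intro g h hgh
      have : ((g : GL (Fin 2) F) : Matrix (Fin 2) (Fin 2) F) 0 0
          = ((h : GL (Fin 2) F) : Matrix (Fin 2) (Fin 2) F) 0 0 := congrArg Subtype.val hgh
      exact Subtype.ext (hinj _ (hC g.2) _ (hC h.2) this)
    have ecard : Nat.card C = Nat.card W := by
      have h1 : Nat.card C ≤ Nat.card W := Nat.card_le_card_of_injective e einj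
      omega
    have esurj : Function.Surjective e :=
      ((Nat.bijective_iff_injective_and_card e).mpr ⟨einj, ecard⟩).2
    intro w hw
    obtain ⟨g, hg⟩ := esurj ⟨w, hw⟩
    exact ⟨g, g.2, congrArg Subtype.val hg⟩
  have hBd : Nat.card B = d := hcard.symm
  apply le_antisymm
  · intro g hg
    obtain ⟨b, hb, hb0⟩ := hmap B hB hBd _ (hpow A hA rfl g hg)
    rwa [hinj g (hA hg) b (hB hb) hb0.symm]
  · intro g hg
    obtain ⟨a, ha, ha0⟩ := hmap A hA rfl _ (hpow B hB hBd g hg)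
    rwa [hinj g (hB hg) a (hA ha) ha0.symm]

set_option linter.unusedSectionVars false

section Struct

variable {H L : Subgroup (GL (Fin 2) F)} {x : GL (Fin 2) F}

lemma x_anti_of (hxM : x ∈ Msub F) (hxD : x ∉ Dsub F) :
    IsAnti2 (x : Matrix (Fin 2) (Fin 2) F) :=
  Or.resolve_left (show IsDiag2 (x : Matrix (Fin 2) (Fin 2) F) ∨
    IsAnti2 (x : Matrix (Fin 2) (Fin 2) F) from hxM)
    (show ¬ IsDiag2 (x : Matrix (Fin 2) (Fin 2) F) from hxD)

lemma x_mem_of (hgen : L ⊔ Subgroup.closure {x} = H) : x ∈ H := by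
  rw [← hgen]
  exact Subgroup.mem_sup_right (Subgroup.subset_closure (Set.mem_singleton x))

lemma decomp_of (hLH : L ≤ H) (hn : ∀ k ∈ H, ∀ l ∈ L, k * l * k⁻¹ ∈ L)
    (ho : orderOf x = 2 ∨ orderOf x = 4)
    (hgen : L ⊔ Subgroup.closure {x} = H) :
    ∀ h ∈ H, ∃ l ∈ L, ∃ k : ℕ, k < orderOf x ∧ h = l * x ^ k := by
  have hx_mem : x ∈ H := x_mem_of hgen
  have hn1 : 1 ≤ orderOf x := by rcases ho with h | h <;> omega
  let K : Subgroup (GL (Fin 2) F) :=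
  { carrier := {h | ∃ l ∈ L, ∃ k : ℕ, h = l * x ^ k}
    one_mem' := ⟨1, L.one_mem, 0, by simp⟩
    mul_mem' := by
      rintro a b ⟨l, hl, j, rfl⟩ ⟨l', hl', k, rfl⟩
      refine ⟨l * (x ^ j * l' * (x ^ j)⁻¹),
        L.mul_mem hl (hn _ (pow_mem hx_mem j) _ hl'), j + k, ?_⟩
      rw [pow_add]
      group
    inv_mem' := by
      rintro a ⟨l, hl, k, rfl⟩
      set n := orderOf x with hnn
      have hxk : x ^ (k * (n - 1)) = (x ^ k)⁻¹ := by
        apply eq_inv_of_mul_eq_one_left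
        rw [← pow_add]
        have he : k * (n - 1) + k = n * k := by
          obtain ⟨m, hm⟩ := Nat.exists_eq_add_of_le hn1
          rw [hm]
          have h1 : 1 + m - 1 = m := by omega
          rw [h1]; ring
        rw [he, pow_mul, pow_orderOf_eq_one, one_pow]
      refine ⟨x ^ (k * (n-1)) * l⁻¹ * (x ^ (k * (n-1)))⁻¹,
        hn _ (pow_mem hx_mem _) _ (L.inv_mem hl), k * (n-1), ?_⟩
      rw [_root_.mul_inv_rev, ← hxk]
      group }
  have hK : H ≤ K := by
    rw [← hgen]
    apply sup_le
    · intro l hl; exact ⟨l, hl, 0, by simp⟩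
    · rw [Subgroup.closure_le]
      intro y hy
      rw [Set.mem_singleton_iff] at hy
      subst hy
      exact ⟨1, L.one_mem, 1, by simp⟩
  intro h hh
  obtain ⟨l, hl, k, rfl⟩ := hK hh
  refine ⟨l, hl, k % orderOf x, Nat.mod_lt _ (by omega), ?_⟩
  rw [pow_mod_orderOf]

lemma card_eq_of (hLD : L ≤ Dsub F) (hLH : L ≤ H)
    (hn : ∀ k ∈ H, ∀ l ∈ L, k * l * k⁻¹ ∈ L)
    (ho : orderOf x = 2 ∨ orderOf x = 4)
    (hgen : L ⊔ Subgroup.closure {x} = H)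
    (htriv : L ⊓ Subgroup.closure {x} = ⊥) :
    Nat.card ↥H = Nat.card ↥L * orderOf x := by
  have hx_mem : x ∈ H := x_mem_of hgen
  set n := orderOf x with hnn
  have hn1 : 1 ≤ n := by rcases ho with h | h <;> omega
  let f : ↥L × Fin n → ↥H := fun p =>
    ⟨(p.1 : GL (Fin 2) F) * x ^ (p.2 : ℕ), H.mul_mem (hLH p.1.2) (pow_mem hx_mem _)⟩
  have hfbij : Function.Bijective f := by
    constructor
    · rintro ⟨⟨l, hl⟩, ⟨a, ha⟩⟩ ⟨⟨l', hl'⟩, ⟨b, hb⟩⟩ heq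
      have heq' : l * x ^ a = l' * x ^ b := congrArg Subtype.val heq
      have key : l'⁻¹ * l = x ^ ((b : ℤ) - (a : ℤ)) := by
        have h1 : x ^ ((b : ℤ) - (a : ℤ)) = x ^ (b : ℕ) * (x ^ (a : ℕ))⁻¹ := by
          rw [_root_.zpow_sub, zpow_natCast, zpow_natCast]
        rw [h1]
        calc l'⁻¹ * l = l'⁻¹ * (l * x ^ a) * (x ^ a)⁻¹ := by group
          _ = l'⁻¹ * (l' * x ^ b) * (x ^ a)⁻¹ := by rw [heq']
          _ = x ^ b * (x ^ a)⁻¹ := by group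
      have hmem : l'⁻¹ * l ∈ L ⊓ Subgroup.closure {x} := by
        constructor
        · exact L.mul_mem (L.inv_mem hl') hl
        · rw [← Subgroup.zpowers_eq_closure, key]
          exact zpow_mem (Subgroup.mem_zpowers x) _
      rw [htriv, Subgroup.mem_bot] at hmem
      have hx1 : x ^ ((b : ℤ) - (a : ℤ)) = 1 := by rw [← key, hmem]
      have hdvd : ((n : ℤ)) ∣ ((b : ℤ) - (a : ℤ)) := orderOf_dvd_iff_zpow_eq_one.mpr hx1
      have hab : a = b := by
        rcases hdvd with ⟨c, hc⟩
        have h1 : (a : ℤ) < n := by exact_mod_cast ha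
        have h2 : (b : ℤ) < n := by exact_mod_cast hb
        have h3 : 0 ≤ (a : ℤ) := Int.natCast_nonneg a
        have h4 : 0 ≤ (b : ℤ) := Int.natCast_nonneg b
        have hn0 : 0 < (n : ℤ) := by exact_mod_cast hn1
        have hc0 : c = 0 := by nlinarith
        rw [hc0, mul_zero] at hc
        omega
      subst hab
      have hl'' : l = l' := by
        calc l = l' * (l'⁻¹ * l) := by group
          _ = l' := by rw [hmem, mul_one]
      simp [hl'']
    · rintro ⟨h, hh⟩
      obtain ⟨l, hl, k, hk, rfl⟩ := decomp_of hLH hn ho hgen h hh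
      exact ⟨⟨⟨l, hl⟩, ⟨k, hk⟩⟩, rfl⟩
  have := Nat.card_eq_of_bijective f hfbij
  rw [Nat.card_prod] at this
  simpa using this.symm

lemma odd_anti_false {g : GL (Fin 2) F} (hg : IsAnti2 (g : Matrix (Fin 2) (Fin 2) F))
    (hodd : Odd (orderOf g)) : False := by
  obtain ⟨m, hm⟩ := hodd
  have h1 : g = (g ^ 2) ^ (m + 1) := by
    rw [← pow_mul]
    have h2 : 2 * (m + 1) = orderOf g + 1 := by omega
    rw [h2, pow_succ, pow_orderOf_eq_one, one_mul]
  have hd := (diag_pow (anti_sq hg).1 (m + 1)).1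
  rw [← h1] at hd
  exact not_diag_anti hd hg

lemma order_two_s {x : GL (Fin 2) F} (hx : IsAnti2 (x : Matrix (Fin 2) (Fin 2) F))
    (h2 : orderOf x = 2) :
    (x : Matrix (Fin 2) (Fin 2) F) 0 1 * (x : Matrix (Fin 2) (Fin 2) F) 1 0 = 1 ∧
    (x ^ 2 : GL (Fin 2) F) = 1 := by
  have hx2 : (x ^ 2 : GL (Fin 2) F) = 1 := by
    have h := pow_orderOf_eq_one x; rwa [h2] at h
  have h00 := (anti_sq hx).2.1
  rw [hx2] at h00
  simp at h00
  exact ⟨h00.symm, hx2⟩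

lemma order_four_s {x : GL (Fin 2) F} (hx : IsAnti2 (x : Matrix (Fin 2) (Fin 2) F))
    (h4 : orderOf x = 4) :
    (x : Matrix (Fin 2) (Fin 2) F) 0 1 * (x : Matrix (Fin 2) (Fin 2) F) 1 0 = -1 ∧
    ((-1 : F) ≠ 1) ∧ (x ^ 2 : GL (Fin 2) F) = -1 := by
  obtain ⟨hsq, h00, h11⟩ := anti_sq hx
  set s := (x : Matrix (Fin 2) (Fin 2) F) 0 1 * (x : Matrix (Fin 2) (Fin 2) F) 1 0 with hs
  have hx4 : ((x ^ 2) ^ 2 : GL (Fin 2) F) = 1 := by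
    have h := pow_orderOf_eq_one x
    rw [h4] at h
    calc ((x ^ 2) ^ 2 : GL (Fin 2) F) = x ^ 4 := by group
      _ = 1 := h
  have hs2 : s ^ 2 = 1 := by
    have := (diag_pow hsq 2).2.1
    rw [hx4, h00] at this
    simpa using this.symm
  have hs1 : s ≠ 1 := by
    intro hseq
    have hx21 : (x ^ 2 : GL (Fin 2) F) = 1 := by
      apply gl_ext
      ext i j
      fin_cases i <;> fin_cases j <;>
        simp [hsq.1, hsq.2, h00, h11, hseq, Matrix.one_apply]
    have := orderOf_dvd_iff_pow_eq_one.mpr hx21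
    rw [h4] at this
    omega
  have hsm1 : s = -1 := by
    have hfac : (s - 1) * (s + 1) = 0 := by linear_combination hs2
    rcases mul_eq_zero.mp hfac with h | h
    · exact absurd (sub_eq_zero.mp h) hs1
    · exact eq_neg_of_add_eq_zero_left h
  refine ⟨hsm1, fun h => hs1 (hsm1.trans h), ?_⟩
  apply gl_ext
  have hval : ((-1 : GL (Fin 2) F) : Matrix (Fin 2) (Fin 2) F) = -1 := by
    simp
  rw [hval]
  ext i j
  fin_cases i <;> fin_cases j <;>
    simp [hsq.1, hsq.2, h00, h11, hsm1, Matrix.one_apply]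

lemma x3_anti {x : GL (Fin 2) F} (hx : IsAnti2 (x : Matrix (Fin 2) (Fin 2) F)) :
    IsAnti2 ((x ^ 3 : GL (Fin 2) F) : Matrix (Fin 2) (Fin 2) F) := by
  have h3 : (x ^ 3 : GL (Fin 2) F) = x ^ 2 * x := by group
  rw [h3, Units.val_mul]
  exact (anti_sq hx).1.mul_anti hx

lemma mulantiGL {l g : GL (Fin 2) F} (hl : IsDiag2 (l : Matrix (Fin 2) (Fin 2) F))
    (hg : IsAnti2 (g : Matrix (Fin 2) (Fin 2) F)) :
    IsAnti2 ((l * g : GL (Fin 2) F) : Matrix (Fin 2) (Fin 2) F) := by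
  rw [Units.val_mul]; exact hl.mul_anti hg

lemma muldiagGL {l g : GL (Fin 2) F} (hl : IsDiag2 (l : Matrix (Fin 2) (Fin 2) F))
    (hg : IsDiag2 (g : Matrix (Fin 2) (Fin 2) F)) :
    IsDiag2 ((l * g : GL (Fin 2) F) : Matrix (Fin 2) (Fin 2) F) := by
  rw [Units.val_mul]; exact hl.mul2 hg

lemma diag_decomp_of (hLD : L ≤ Dsub F) (hLH : L ≤ H)
    (hn : ∀ k ∈ H, ∀ l ∈ L, k * l * k⁻¹ ∈ L)
    (hxM : x ∈ Msub F) (hxD : x ∉ Dsub F)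
    (ho : orderOf x = 2 ∨ orderOf x = 4)
    (hgen : L ⊔ Subgroup.closure {x} = H) :
    ∀ g ∈ H, IsDiag2 (g : Matrix (Fin 2) (Fin 2) F) →
      g ∈ L ∨ (orderOf x = 4 ∧ ∃ l ∈ L, g = l * x ^ 2) := by
  intro g hg hgd
  have hxa := x_anti_of hxM hxD
  obtain ⟨l, hl, k, hk, rfl⟩ := decomp_of hLH hn ho hgen g hg
  have hld : IsDiag2 (l : Matrix (Fin 2) (Fin 2) F) := hLD hl
  have hxkd : IsDiag2 ((x ^ k : GL (Fin 2) F) : Matrix (Fin 2) (Fin 2) F) := by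
    have he : (x ^ k : GL (Fin 2) F) = l⁻¹ * (l * x ^ k) := by group
    rw [he]
    exact muldiagGL (inv_diag hld) hgd
  rcases ho with h2 | h4
  · rw [h2] at hk
    interval_cases k
    · left; simpa using hl
    · exact absurd hxkd (fun h => not_diag_anti (by simpa using h) hxa)
  · rw [h4] at hk
    interval_cases k
    · left; simpa using hl
    · exact absurd hxkd (fun h => not_diag_anti (by simpa using h) hxa)
    · exact Or.inr ⟨h4, l, hl, rfl⟩
    · exact absurd (x3_anti hxa) (not_diag_anti hxkd)

lemma odd_mem_of (hLD : L ≤ Dsub F) (hLH : L ≤ H)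
    (hn : ∀ k ∈ H, ∀ l ∈ L, k * l * k⁻¹ ∈ L)
    (hxM : x ∈ Msub F) (hxD : x ∉ Dsub F)
    (ho : orderOf x = 2 ∨ orderOf x = 4)
    (hgen : L ⊔ Subgroup.closure {x} = H)
    (htriv : L ⊓ Subgroup.closure {x} = ⊥) :
    ∀ g ∈ H, Odd (orderOf g) → g ∈ L := by
  intro g hg hodd
  have hxa := x_anti_of hxM hxD
  obtain ⟨l, hl, k, hk, rfl⟩ := decomp_of hLH hn ho hgen g hg
  have hld : IsDiag2 (l : Matrix (Fin 2) (Fin 2) F) := hLD hl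
  rcases ho with h2 | h4
  · rw [h2] at hk
    interval_cases k
    · simpa using hl
    · exact absurd hodd (fun h => odd_anti_false (by simpa using mulantiGL hld hxa) h)
  · rw [h4] at hk
    interval_cases k
    · simpa using hl
    · exact absurd hodd (fun h => odd_anti_false (by simpa using mulantiGL hld hxa) h)
    · -- g = l * x^2 : impossible for odd order
      exfalso
      obtain ⟨m, hm⟩ := hodd
      set o := orderOf (l * x ^ 2) with hoo
      have hcomm : Commute l (x ^ 2) := by
        have := scalar_comm (anti_sq hxa).1
          ((anti_sq hxa).2.1.trans (anti_sq hxa).2.2.symm) l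
        exact this.symm
      have hpow : (l * x ^ 2) ^ o = 1 := pow_orderOf_eq_one _
      rw [hcomm.mul_pow, ← pow_mul] at hpow
      have hxo : (x ^ (2 * o) : GL (Fin 2) F) = x ^ 2 := by
        rw [← pow_mod_orderOf, h4]
        congr 1
        omega
      rw [hxo] at hpow
      have hx2 : (x ^ 2 : GL (Fin 2) F) = (l ^ o)⁻¹ := by
        calc (x ^ 2 : GL (Fin 2) F) = (l ^ o)⁻¹ * (l ^ o * x ^ 2) := by group
          _ = (l ^ o)⁻¹ := by rw [hpow, mul_one]
      have hmem : (x ^ 2 : GL (Fin 2) F) ∈ L ⊓ Subgroup.closure {x} := by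
        constructor
        · rw [hx2]; exact L.inv_mem (L.pow_mem hl o)
        · exact Subgroup.pow_mem _ (Subgroup.subset_closure (Set.mem_singleton x)) 2
      rw [htriv, Subgroup.mem_bot] at hmem
      have := orderOf_dvd_iff_pow_eq_one.mpr hmem
      rw [h4] at this
      omega
    · exact absurd hodd (fun h => odd_anti_false
        (by simpa using mulantiGL hld (x3_anti hxa)) h)

lemma four_dvd_cardL {l z : GL (Fin 2) F} {L : Subgroup (GL (Fin 2) F)}
    (hl : l ∈ L) (hz : z ∈ L)
    (hdetl : ((l : Matrix (Fin 2) (Fin 2) F)).det = -1)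
    (hdetz : ((z : Matrix (Fin 2) (Fin 2) F)).det = 1)
    (hzo : orderOf z = 2) (hm1 : (-1 : F) ≠ 1) :
    4 ∣ Nat.card ↥L := by
  haveI := Fact.mk Nat.prime_two
  set δ : ↥L →* Fˣ := gdet.comp L.subtype with hδ
  set lL : ↥L := ⟨l, hl⟩
  set zL : ↥L := ⟨z, hz⟩
  have hdl : ((δ lL : Fˣ) : F) = -1 := by
    rw [hδ]; simpa [gdet_val] using hdetl
  have hdlne : δ lL ≠ 1 := by
    intro h
    rw [h] at hdl
    exact hm1 (by simpa using hdl.symm)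
  have hdlsq : (δ lL) ^ 2 = 1 := by
    apply Units.ext
    rw [Units.val_pow_eq_pow_val, hdl]
    simp
  have hordl : orderOf (δ lL) = 2 := orderOf_eq_prime hdlsq hdlne
  have hrange : 2 ∣ Nat.card δ.range := by
    have h := Subgroup.orderOf_dvd_natCard δ.range (⟨lL, rfl⟩ : δ lL ∈ δ.range)
    rwa [hordl] at h
  have hker : zL ∈ δ.ker := by
    rw [MonoidHom.mem_ker]
    apply Units.ext
    rw [hδ]
    simpa [gdet_val] using hdetz
  have hordz : orderOf zL = 2 := by
    have h := orderOf_injective L.subtype (Subgroup.subtype_injective L) zL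
    rw [show L.subtype zL = z from rfl] at h
    exact h.symm.trans hzo
  have hkd : 2 ∣ Nat.card δ.ker := by
    have h := Subgroup.orderOf_dvd_natCard δ.ker hker
    rwa [hordz] at h
  have hcard : Nat.card ↥L = Nat.card (↥L ⧸ δ.ker) * Nat.card δ.ker :=
    Subgroup.card_eq_card_quotient_mul_card_subgroup δ.ker
  have hquot : Nat.card (↥L ⧸ δ.ker) = Nat.card δ.range :=
    Nat.card_congr (QuotientGroup.quotientKerEquivRange δ).toEquiv
  obtain ⟨u, hu⟩ := hrange
  obtain ⟨v, hv⟩ := hkd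
  rw [hcard, hquot, hu, hv]
  exact ⟨u * v, by ring⟩

lemma no_order4_of (hLD : L ≤ Dsub F) (hLH : L ≤ H)
    (hn : ∀ k ∈ H, ∀ l ∈ L, k * l * k⁻¹ ∈ L)
    (hxM : x ∈ Msub F) (hxD : x ∉ Dsub F)
    (h2 : orderOf x = 2)
    (hgen : L ⊔ Subgroup.closure {x} = H)
    (htriv : L ⊓ Subgroup.closure {x} = ⊥)
    (hcf : CubeFree (Nat.card ↥H)) :
    ∀ g ∈ H, orderOf g ≠ 4 := by
  intro g hg hg4
  have hxa := x_anti_of hxM hxD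
  have hx_mem : x ∈ H := x_mem_of hgen
  have hcard : Nat.card ↥H = Nat.card ↥L * 2 := by
    rw [card_eq_of hLD hLH hn (Or.inl h2) hgen htriv, h2]
  have h8 : ¬ (2 ^ 3 ∣ Nat.card ↥H) := hcf 2 Nat.prime_two
  have h4L : ¬ (4 ∣ Nat.card ↥L) := by
    intro ⟨c, hc⟩
    exact h8 ⟨c, by rw [hcard, hc]; ring⟩
  obtain ⟨l, hl, k, hk, rfl⟩ := decomp_of hLH hn (Or.inl h2) hgen g hg
  have hld : IsDiag2 (l : Matrix (Fin 2) (Fin 2) F) := hLD hl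
  rw [h2] at hk
  interval_cases k
  · -- g = l, order 4 element of L
    apply h4L
    rw [← hg4]
    exact Subgroup.orderOf_dvd_natCard L (by simpa using hl)
  · -- g = l * x
    rw [pow_one] at hg4 hg
    have hx2 : (x ^ 2 : GL (Fin 2) F) = 1 := by
      have h := pow_orderOf_eq_one x; rwa [h2] at h
    have hgsq : (l * x) ^ 2 = l * (x * l * x⁻¹) * x ^ 2 := by
      rw [sq, sq]; group
    rw [hx2, mul_one] at hgsq
    have hσ : x * l * x⁻¹ ∈ L := hn x hx_mem l hl
    have hzL : (l * x) ^ 2 ∈ L := hgsq ▸ L.mul_mem hl hσ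
    have hordz : orderOf ((l * x) ^ 2) = 2 := by
      rw [orderOf_pow, hg4]
      norm_num
    obtain ⟨hcd, hc00, hc11⟩ := conj_anti_diag hxa hld
    set d := (l : Matrix (Fin 2) (Fin 2) F) 0 0 * (l : Matrix (Fin 2) (Fin 2) F) 1 1 with hd
    have hz00 : (((l * x) ^ 2 : GL (Fin 2) F) : Matrix (Fin 2) (Fin 2) F) 0 0 = d := by
      rw [hgsq, mul_entry, hld.1, hc00]
      simp [hd]
    have hz11 : (((l * x) ^ 2 : GL (Fin 2) F) : Matrix (Fin 2) (Fin 2) F) 1 1 = d := by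
      rw [hgsq, mul_entry, hld.2, hc11]
      simp [hd, mul_comm]
    have hzdiag : IsDiag2 (((l * x) ^ 2 : GL (Fin 2) F) : Matrix (Fin 2) (Fin 2) F) := by
      rw [hgsq]
      exact muldiagGL hld hcd
    have hzsq : (((l * x) ^ 2) ^ 2 : GL (Fin 2) F) = 1 := by
      have h := pow_orderOf_eq_one ((l * x) ^ 2); rwa [hordz] at h
    have hd2 : d ^ 2 = 1 := by
      have := (diag_pow hzdiag 2).2.1
      rw [hzsq, hz00] at this
      simpa using this.symm
    have hzne : ((l * x) ^ 2 : GL (Fin 2) F) ≠ 1 := by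
      intro h
      rw [h] at hordz
      simp at hordz
    have hdne : d ≠ 1 := by
      intro hdeq
      apply hzne
      apply gl_ext
      ext i j
      fin_cases i <;> fin_cases j <;>
        simp [hzdiag.1, hzdiag.2, hz00, hz11, hdeq, Matrix.one_apply]
    have hdm1 : d = -1 := by
      have hfac : (d - 1) * (d + 1) = 0 := by linear_combination hd2
      rcases mul_eq_zero.mp hfac with h | h
      · exact absurd (sub_eq_zero.mp h) hdne
      · exact eq_neg_of_add_eq_zero_left h
    have hm1 : (-1 : F) ≠ 1 := fun h => hdne (hdm1.trans h)
    apply h4L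
    refine four_dvd_cardL hl hzL ?_ ?_ hordz hm1
    · rw [Matrix.det_fin_two, hld.1, hld.2]
      simpa using hdm1
    · rw [Matrix.det_fin_two, hzdiag.1, hzdiag.2, hz00, hz11]
      rw [hdm1]; ring

/-- odd-order part of a diagonal subgroup -/
def Osub (L : Subgroup (GL (Fin 2) F)) (hLD : L ≤ Dsub F) : Subgroup (GL (Fin 2) F) where
  carrier := {g | g ∈ L ∧ Odd (orderOf g)}
  one_mem' := ⟨L.one_mem, by simp⟩
  mul_mem' := by
    rintro a b ⟨haL, ha⟩ ⟨hbL, hb⟩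
    refine ⟨L.mul_mem haL hbL, ?_⟩
    have hcomm : Commute a b := diag_comm (hLD haL) (hLD hbL)
    have hdvd := hcomm.orderOf_mul_dvd_lcm
    rw [← Nat.not_even_iff_odd, even_iff_two_dvd] at ha hb ⊢
    intro h2
    have h2' : 2 ∣ Nat.lcm (orderOf a) (orderOf b) := h2.trans hdvd
    have := (Nat.Prime.dvd_mul Nat.prime_two).mp
      (h2'.trans (Nat.lcm_dvd_mul (orderOf a) (orderOf b)))
    tauto
  inv_mem' := by
    rintro a ⟨haL, ha⟩
    exact ⟨L.inv_mem haL, by simpa using ha⟩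

lemma Osub_le (hLD : L ≤ Dsub F) : Osub L hLD ≤ L := fun _ h => h.1

lemma Osub_odd (hLD : L ≤ Dsub F) {g : GL (Fin 2) F} (h : g ∈ Osub L hLD) :
    Odd (orderOf g) := h.2

lemma orderOf_conj_eq (x g : GL (Fin 2) F) : orderOf (x * g * x⁻¹) = orderOf g := by
  have h : x * g * x⁻¹ = (MulAut.conj x).toMonoidHom g := rfl
  rw [h]
  exact orderOf_injective (MulAut.conj x).toMonoidHom (MulAut.conj x).injective g

lemma Osub_conj (hLD : L ≤ Dsub F) (hLH : L ≤ H)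
    (hn : ∀ k ∈ H, ∀ l ∈ L, k * l * k⁻¹ ∈ L)
    (hgen : L ⊔ Subgroup.closure {x} = H) :
    ∀ g ∈ Osub L hLD, x * g * x⁻¹ ∈ Osub L hLD := by
  rintro g ⟨hgL, hgo⟩
  exact ⟨hn x (x_mem_of hgen) g hgL, by rwa [orderOf_conj_eq]⟩

lemma Osub_sqrt (hLD : L ≤ Dsub F) {g : GL (Fin 2) F} (hg : g ∈ Osub L hLD) :
    ∃ h ∈ Osub L hLD, h ^ 2 = g := by
  obtain ⟨m, hm⟩ := hg.2
  refine ⟨g ^ (m + 1), (Osub L hLD).pow_mem hg _, ?_⟩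
  rw [← pow_mul]
  have h2 : (m + 1) * 2 = orderOf g + 1 := by omega
  rw [h2, pow_succ, pow_orderOf_eq_one, one_mul]

lemma Osub_decomp (hLD : L ≤ Dsub F) (hLH : L ≤ H)
    (hn : ∀ k ∈ H, ∀ l ∈ L, k * l * k⁻¹ ∈ L)
    (hxM : x ∈ Msub F) (hxD : x ∉ Dsub F)
    (hgen : L ⊔ Subgroup.closure {x} = H) :
    ∀ g ∈ Osub L hLD, ∃ a ∈ Osub L hLD ⊓ Sc F, ∃ b ∈ Osub L hLD ⊓ Ac F, g = a * b := by
  intro g hg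
  have hxa := x_anti_of hxM hxD
  obtain ⟨h, hh, hh2⟩ := Osub_sqrt hLD hg
  have hhd : IsDiag2 (h : Matrix (Fin 2) (Fin 2) F) := hLD (Osub_le hLD hh)
  obtain ⟨hcd0, hc000, hc110⟩ := conj_anti_diag hxa hhd
  obtain ⟨σh, hσh⟩ : ∃ y : GL (Fin 2) F, y = x * h * x⁻¹ := ⟨_, rfl⟩
  have hσmem : σh ∈ Osub L hLD := by rw [hσh]; exact Osub_conj hLD hLH hn hgen h hh
  have hσd : IsDiag2 (σh : Matrix (Fin 2) (Fin 2) F) := by rw [hσh]; exact hcd0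
  have hc00 : (σh : Matrix (Fin 2) (Fin 2) F) 0 0 = (h : Matrix (Fin 2) (Fin 2) F) 1 1 := by
    rw [hσh]; exact hc000
  have hc11 : (σh : Matrix (Fin 2) (Fin 2) F) 1 1 = (h : Matrix (Fin 2) (Fin 2) F) 0 0 := by
    rw [hσh]; exact hc110
  refine ⟨h * σh, ⟨(Osub L hLD).mul_mem hh hσmem, muldiagGL hhd hσd, ?_⟩,
    h * σh⁻¹, ⟨(Osub L hLD).mul_mem hh ((Osub L hLD).inv_mem hσmem),
      muldiagGL hhd (inv_diag hσd), ?_⟩, ?_⟩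
  · -- scalar : entries equal
    rw [mul_entry, mul_entry, hhd.1, hhd.2, hc00, hc11]
    ring
  · -- det 1
    have hσdet : gdet σh = gdet h := by
      apply Units.ext
      rw [gdet_val, gdet_val, Matrix.det_fin_two, Matrix.det_fin_two,
        hhd.1, hhd.2, hσd.1, hσd.2, hc00, hc11]
      ring
    have hdet : gdet (h * σh⁻¹) = 1 := by
      calc gdet (h * σh⁻¹) = gdet h * gdet σh⁻¹ := MonoidHom.map_mul gdet h σh⁻¹
        _ = gdet h * (gdet σh)⁻¹ := by rw [MonoidHom.map_inv]
        _ = gdet h * (gdet h)⁻¹ := by rw [hσdet]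
        _ = 1 := mul_inv_cancel _
    have hval : ((gdet (h * σh⁻¹) : Fˣ) : F) = 1 := by rw [hdet]; rfl
    rw [gdet_val, Matrix.det_fin_two] at hval
    have hbd : IsDiag2 ((h * σh⁻¹ : GL (Fin 2) F) : Matrix (Fin 2) (Fin 2) F) :=
      muldiagGL hhd (inv_diag hσd)
    rw [hbd.1, hbd.2] at hval
    simpa using hval
  · -- g = a * b
    have hc : Commute h σh := diag_comm hhd hσd
    rw [← hh2, sq, hc.inv_right.eq]
    group

lemma ScAc_inter (hLD : L ≤ Dsub F) :
    ∀ g, g ∈ Osub L hLD ⊓ Sc F → g ∈ Osub L hLD ⊓ Ac F → g = 1 := by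
  rintro g ⟨hgO, hgd, hgs⟩ ⟨-, -, hga⟩
  have h00 : (g : Matrix (Fin 2) (Fin 2) F) 0 0 ^ 2 = 1 := by
    have := hga
    rw [← hgs] at this
    calc (g : Matrix (Fin 2) (Fin 2) F) 0 0 ^ 2
        = (g : Matrix (Fin 2) (Fin 2) F) 0 0 * (g : Matrix (Fin 2) (Fin 2) F) 0 0 := sq _
      _ = 1 := this
  have hg2 : g ^ 2 = 1 := by
    apply gl_ext
    obtain ⟨hd, h0, h1⟩ := diag_pow hgd 2
    ext i j
    fin_cases i <;> fin_cases j <;>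
      simp [hd.1, hd.2, h0, h1, h00, hgs ▸ h00, Matrix.one_apply]
  have hdvd : orderOf g ∣ 2 := orderOf_dvd_iff_pow_eq_one.mpr hg2
  have hodd := hgO.2
  rw [← Nat.not_even_iff_odd, even_iff_two_dvd] at hodd
  rcases (Nat.dvd_prime Nat.prime_two).mp hdvd with h | h
  · exact orderOf_eq_one_iff.mp h
  · exact absurd (by rw [h] : 2 ∣ orderOf g) hodd

lemma Osub_card (hLD : L ≤ Dsub F) (hLH : L ≤ H)
    (hn : ∀ k ∈ H, ∀ l ∈ L, k * l * k⁻¹ ∈ L)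
    (hxM : x ∈ Msub F) (hxD : x ∉ Dsub F)
    (hgen : L ⊔ Subgroup.closure {x} = H) :
    Nat.card ↥(Osub L hLD) =
      Nat.card ↥(Osub L hLD ⊓ Sc F) * Nat.card ↥(Osub L hLD ⊓ Ac F) := by
  let f : ↥(Osub L hLD ⊓ Sc F) × ↥(Osub L hLD ⊓ Ac F) → ↥(Osub L hLD) := fun p =>
    ⟨(p.1 : GL (Fin 2) F) * p.2,
      (Osub L hLD).mul_mem p.1.2.1 p.2.2.1⟩
  have hbij : Function.Bijective f := by
    constructor
    · rintro ⟨⟨a, ha⟩, ⟨b, hb⟩⟩ ⟨⟨a', ha'⟩, ⟨b', hb'⟩⟩ heq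
      have heq' : a * b = a' * b' := congrArg Subtype.val heq
      have hkey : a'⁻¹ * a = b' * b⁻¹ := by
        calc a'⁻¹ * a = a'⁻¹ * (a * b) * b⁻¹ := by group
          _ = a'⁻¹ * (a' * b') * b⁻¹ := by rw [heq']
          _ = b' * b⁻¹ := by group
      have h1 : a'⁻¹ * a ∈ Osub L hLD ⊓ Sc F := mul_mem (inv_mem ha') ha
      have h2 : a'⁻¹ * a ∈ Osub L hLD ⊓ Ac F := hkey ▸ mul_mem hb' (inv_mem hb)
      have h3 : a'⁻¹ * a = 1 := ScAc_inter hLD _ h1 h2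
      have ha'' : a = a' := by
        calc a = a' * (a'⁻¹ * a) := by group
          _ = a' := by rw [h3, mul_one]
      have hb'' : b = b' := by
        have h4 : b' * b⁻¹ = 1 := by rw [← hkey, h3]
        have h5 : b' = b := by
          calc b' = (b' * b⁻¹) * b := by group
            _ = b := by rw [h4, one_mul]
        exact h5.symm
      simp [ha'', hb'']
    · rintro ⟨g, hg⟩
      obtain ⟨a, ha, b, hb, rfl⟩ := Osub_decomp hLD hLH hn hxM hxD hgen g hg
      exact ⟨⟨⟨a, ha⟩, ⟨b, hb⟩⟩, rfl⟩
  have := Nat.card_eq_of_bijective f hbij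
  rw [Nat.card_prod] at this
  exact this.symm

lemma central_char (hLD : L ≤ Dsub F) (hLH : L ≤ H)
    (hxM : x ∈ Msub F) (hxD : x ∉ Dsub F)
    (hgen : L ⊔ Subgroup.closure {x} = H) :
    ∀ g ∈ L, ((∀ h ∈ H, g * h = h * g) ↔ g ∈ Sc F) := by
  intro g hgL
  have hgd : IsDiag2 (g : Matrix (Fin 2) (Fin 2) F) := hLD hgL
  have hxa := x_anti_of hxM hxD
  constructor
  · intro hc
    have hx := hc x (x_mem_of hgen)
    have hconj : x * g * x⁻¹ = g := by rw [← hx]; group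
    obtain ⟨-, hc00, -⟩ := conj_anti_diag hxa hgd
    rw [hconj] at hc00
    exact ⟨hgd, hc00.trans rfl |>.symm ▸ hc00⟩
  · intro ⟨hd, hs⟩ h _
    exact scalar_comm hd hs h

lemma entry_sq_one {z : GL (Fin 2) F} (hzd : IsDiag2 (z : Matrix (Fin 2) (Fin 2) F))
    (hz2 : z ^ 2 = 1) :
    ((z : Matrix (Fin 2) (Fin 2) F) 0 0 = 1 ∨ (z : Matrix (Fin 2) (Fin 2) F) 0 0 = -1) ∧
    ((z : Matrix (Fin 2) (Fin 2) F) 1 1 = 1 ∨ (z : Matrix (Fin 2) (Fin 2) F) 1 1 = -1) := by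
  obtain ⟨-, h0, h1⟩ := diag_pow hzd 2
  rw [hz2] at h0 h1
  have h0' : (z : Matrix (Fin 2) (Fin 2) F) 0 0 ^ 2 = 1 := by simpa using h0.symm
  have h1' : (z : Matrix (Fin 2) (Fin 2) F) 1 1 ^ 2 = 1 := by simpa using h1.symm
  constructor
  · have hfac : ((z : Matrix (Fin 2) (Fin 2) F) 0 0 - 1) *
        ((z : Matrix (Fin 2) (Fin 2) F) 0 0 + 1) = 0 := by linear_combination h0'
    rcases mul_eq_zero.mp hfac with h | h
    · exact Or.inl (sub_eq_zero.mp h)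
    · exact Or.inr (eq_neg_of_add_eq_zero_left h)
  · have hfac : ((z : Matrix (Fin 2) (Fin 2) F) 1 1 - 1) *
        ((z : Matrix (Fin 2) (Fin 2) F) 1 1 + 1) = 0 := by linear_combination h1'
    rcases mul_eq_zero.mp hfac with h | h
    · exact Or.inl (sub_eq_zero.mp h)
    · exact Or.inr (eq_neg_of_add_eq_zero_left h)

lemma neg_one_val : ((-1 : GL (Fin 2) F) : Matrix (Fin 2) (Fin 2) F) = -1 := by simp

lemma orderOf_neg_one (hm1 : (-1 : F) ≠ 1) : orderOf (-1 : GL (Fin 2) F) = 2 := by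
  haveI := Fact.mk Nat.prime_two
  apply orderOf_eq_prime
  · apply gl_ext
    rw [Units.val_pow_eq_pow_val, neg_one_val]
    simp
  · intro h
    have h2 := congrArg (fun m : GL (Fin 2) F => (m : Matrix (Fin 2) (Fin 2) F) 0 0) h
    simp only [neg_one_val] at h2
    simp at h2
    exact hm1 (by simpa using h2)

lemma invol_neg_one (hLD : L ≤ Dsub F) (hLH : L ≤ H)
    (hn : ∀ k ∈ H, ∀ l ∈ L, k * l * k⁻¹ ∈ L)
    (hxM : x ∈ Msub F) (hxD : x ∉ Dsub F)
    (hgen : L ⊔ Subgroup.closure {x} = H)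
    (h4L : ¬ 4 ∣ Nat.card ↥L) :
    ∀ z ∈ L, orderOf z = 2 → z = (-1 : GL (Fin 2) F) := by
  intro z hz ho2
  have hxa := x_anti_of hxM hxD
  have hzd := hLD hz
  have hz2 : z ^ 2 = 1 := by have h := pow_orderOf_eq_one z; rwa [ho2] at h
  have hzne : z ≠ 1 := by intro h; rw [h] at ho2; simp at ho2
  obtain ⟨h00, h11⟩ := entry_sq_one hzd hz2
  -- mixed case helper
  have hmixed : (z : Matrix (Fin 2) (Fin 2) F) 0 0 *
      (z : Matrix (Fin 2) (Fin 2) F) 1 1 = -1 → False := by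
    intro hprod
    have hm1 : (-1 : F) ≠ 1 := by
      intro hcontr
      apply hzne
      apply gl_ext
      have h00' : (z : Matrix (Fin 2) (Fin 2) F) 0 0 = 1 := by
        rcases h00 with h | h
        · exact h
        · rw [h, hcontr]
      have h11' : (z : Matrix (Fin 2) (Fin 2) F) 1 1 = 1 := by
        rcases h11 with h | h
        · exact h
        · rw [h, hcontr]
      ext i j
      fin_cases i <;> fin_cases j <;> simp [hzd.1, hzd.2, h00', h11', Matrix.one_apply]
    obtain ⟨hcd, hc00, hc11⟩ := conj_anti_diag hxa hzd
    have hσz : x * z * x⁻¹ ∈ L := hn x (x_mem_of hgen) z hz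
    have hwL : z * (x * z * x⁻¹) ∈ L := L.mul_mem hz hσz
    have hw : z * (x * z * x⁻¹) = (-1 : GL (Fin 2) F) := by
      apply gl_ext
      rw [neg_one_val]
      ext i j
      fin_cases i <;> fin_cases j <;>
        simp [mul_entry, hzd.1, hzd.2, hcd.1, hcd.2, hc00, hc11, hprod,
          mul_comm ((z : Matrix (Fin 2) (Fin 2) F) 1 1)]
    apply h4L
    refine four_dvd_cardL hz (hw ▸ hwL) ?_ ?_ ?_ hm1
    · rw [Matrix.det_fin_two, hzd.1, hzd.2]
      simpa using hprod
    · rw [neg_one_val]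
      simp [Matrix.det_fin_two]
    · exact orderOf_neg_one hm1
  rcases h00 with h0 | h0 <;> rcases h11 with h1 | h1
  · exact absurd (by
      apply gl_ext
      ext i j
      fin_cases i <;> fin_cases j <;> simp [hzd.1, hzd.2, h0, h1, Matrix.one_apply]) hzne
  · exact absurd (by rw [h0, h1, one_mul]) (fun h => hmixed h)
  · exact absurd (by rw [h0, h1, mul_one]) (fun h => hmixed h)
  · apply gl_ext
    rw [neg_one_val]
    ext i j
    fin_cases i <;> fin_cases j <;> simp [hzd.1, hzd.2, h0, h1, Matrix.one_apply]

lemma L_odd_of (hodd : ¬ 2 ∣ Nat.card ↥L) : ∀ g ∈ L, Odd (orderOf g) := by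
  intro g hg
  rw [← Nat.not_even_iff_odd, even_iff_two_dvd]
  intro h2
  exact hodd (h2.trans (Subgroup.orderOf_dvd_natCard L hg))

lemma two_part_of (hLD : L ≤ Dsub F) (hLH : L ≤ H)
    (hn : ∀ k ∈ H, ∀ l ∈ L, k * l * k⁻¹ ∈ L)
    (hxM : x ∈ Msub F) (hxD : x ∉ Dsub F)
    (hgen : L ⊔ Subgroup.closure {x} = H)
    (h4L : ¬ 4 ∣ Nat.card ↥L) :
    ∀ g ∈ L, ∃ a ∈ Osub L hLD, g = a ∨ g = a * (-1 : GL (Fin 2) F) := by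
  intro g hg
  set k := orderOf g with hk
  have hgk : g ^ k = 1 := pow_orderOf_eq_one g
  have hkd : k ∣ Nat.card ↥L := Subgroup.orderOf_dvd_natCard L hg
  have hkpos : 0 < k := orderOf_pos g
  rcases Nat.even_or_odd k with hke | hko
  swap
  · exact ⟨g, ⟨hg, hko⟩, Or.inl rfl⟩
  obtain ⟨v, hv⟩ := (even_iff_two_dvd.mp hke)
  have hvodd : Odd v := by
    rcases Nat.even_or_odd v with he | ho'
    · exfalso
      obtain ⟨u, hu⟩ := he
      exact h4L (dvd_trans ⟨u, by omega⟩ hkd)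
    · exact ho'
  have hcop : IsCoprime (2 : ℤ) (v : ℤ) := by
    rw [show (2 : ℤ) = ((2 : ℕ) : ℤ) from rfl, Nat.isCoprime_iff_coprime]
    exact Nat.coprime_two_left.mpr hvodd
  obtain ⟨s, t, hst⟩ := hcop
  have hgkz : g ^ ((k : ℕ) : ℤ) = 1 := by rw [zpow_natCast, hgk]
  set u := g ^ (s * 2 : ℤ) with hu
  set w := g ^ (t * v : ℤ) with hw
  have huvz : u ^ ((v : ℕ) : ℤ) = 1 := by
    rw [hu, ← _root_.zpow_mul]
    have he : s * 2 * (v : ℤ) = (k : ℤ) * s := by rw [hv]; push_cast; ring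
    rw [he, _root_.zpow_mul, hgkz, _root_.one_zpow]
  have huv : u ^ v = 1 := by rwa [zpow_natCast] at huvz
  have hw2z : w ^ ((2 : ℕ) : ℤ) = 1 := by
    rw [hw, ← _root_.zpow_mul]
    have he : t * (v : ℤ) * ((2 : ℕ) : ℤ) = (k : ℤ) * t := by rw [hv]; push_cast; ring
    rw [he, _root_.zpow_mul, hgkz, _root_.one_zpow]
  have hw2 : w ^ (2 : ℕ) = 1 := by rwa [zpow_natCast] at hw2z
  have huL : u ∈ L := L.zpow_mem hg _
  have hwL : w ∈ L := L.zpow_mem hg _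
  have huodd : Odd (orderOf u) := by
    have hdvd : orderOf u ∣ v := orderOf_dvd_of_pow_eq_one huv
    rw [← Nat.not_even_iff_odd, even_iff_two_dvd]
    intro h2
    rw [← Nat.not_even_iff_odd, even_iff_two_dvd] at hvodd
    exact hvodd (h2.trans hdvd)
  have hguw : g = u * w := by
    rw [hu, hw, ← _root_.zpow_add]
    have : s * 2 + t * v = 1 := hst
    rw [this, zpow_one]
  by_cases hw1 : w = 1
  · exact ⟨u, ⟨huL, huodd⟩, Or.inl (by rw [hguw, hw1, mul_one])⟩
  · haveI := Fact.mk Nat.prime_two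
    have hwo : orderOf w = 2 := orderOf_eq_prime hw2 hw1
    have hwm1 : w = (-1 : GL (Fin 2) F) :=
      invol_neg_one hLD hLH hn hxM hxD hgen h4L w hwL hwo
    exact ⟨u, ⟨huL, huodd⟩, Or.inr (by rw [hguw, hwm1])⟩

lemma negone_mem_of (hLD : L ≤ Dsub F) (hLH : L ≤ H)
    (hn : ∀ k ∈ H, ∀ l ∈ L, k * l * k⁻¹ ∈ L)
    (hxM : x ∈ Msub F) (hxD : x ∉ Dsub F)
    (hgen : L ⊔ Subgroup.closure {x} = H)
    (h2 : 2 ∣ Nat.card ↥L) (h4L : ¬ 4 ∣ Nat.card ↥L) :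
    (-1 : GL (Fin 2) F) ∈ L := by
  haveI : Fintype ↥L := Fintype.ofFinite _
  haveI := Fact.mk Nat.prime_two
  obtain ⟨z, hz⟩ := exists_prime_orderOf_dvd_card (G := ↥L) 2
    (by rwa [← Nat.card_eq_fintype_card])
  have hzval : orderOf (z : GL (Fin 2) F) = 2 := by
    have h := orderOf_injective L.subtype (Subgroup.subtype_injective L) z
    rw [show L.subtype z = (z : GL (Fin 2) F) from rfl] at h
    rw [h, hz]
  have := invol_neg_one hLD hLH hn hxM hxD hgen h4L (z : GL (Fin 2) F) z.2 hzval
  rw [← this]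
  exact z.2

lemma Osub_char (hLD : L ≤ Dsub F) (hLH : L ≤ H)
    (hn : ∀ k ∈ H, ∀ l ∈ L, k * l * k⁻¹ ∈ L)
    (hxM : x ∈ Msub F) (hxD : x ∉ Dsub F)
    (ho : orderOf x = 2 ∨ orderOf x = 4)
    (hgen : L ⊔ Subgroup.closure {x} = H)
    (htriv : L ⊓ Subgroup.closure {x} = ⊥) :
    ∀ g, g ∈ Osub L hLD ↔ (g ∈ H ∧ Odd (orderOf g)) := by
  intro g
  constructor
  · intro h
    exact ⟨hLH h.1, h.2⟩
  · intro ⟨hgH, hgo⟩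
    exact ⟨odd_mem_of hLD hLH hn hxM hxD ho hgen htriv g hgH hgo, hgo⟩

lemma OSc_char (hLD : L ≤ Dsub F) (hLH : L ≤ H)
    (hn : ∀ k ∈ H, ∀ l ∈ L, k * l * k⁻¹ ∈ L)
    (hxM : x ∈ Msub F) (hxD : x ∉ Dsub F)
    (ho : orderOf x = 2 ∨ orderOf x = 4)
    (hgen : L ⊔ Subgroup.closure {x} = H)
    (htriv : L ⊓ Subgroup.closure {x} = ⊥) :
    ∀ g, g ∈ Osub L hLD ⊓ Sc F ↔
      (g ∈ H ∧ Odd (orderOf g) ∧ ∀ h ∈ H, g * h = h * g) := by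
  intro g
  constructor
  · intro ⟨hO, hSc⟩
    refine ⟨hLH hO.1, hO.2, ?_⟩
    exact (central_char hLD hLH hxM hxD hgen g hO.1).mpr hSc
  · intro ⟨hgH, hgo, hc⟩
    have hgO : g ∈ Osub L hLD :=
      (Osub_char hLD hLH hn hxM hxD ho hgen htriv g).mpr ⟨hgH, hgo⟩
    exact ⟨hgO, (central_char hLD hLH hxM hxD hgen g hgO.1).mp hc⟩

end Struct

section Transfer

variable {H₁ H₂ : Subgroup (GL (Fin 2) F)}

lemma orderOf_phi (φ : ↥H₁ ≃* ↥H₂) (a : ↥H₁) :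
    orderOf ((φ a : ↥H₂) : GL (Fin 2) F) = orderOf ((a : ↥H₁) : GL (Fin 2) F) :=
  calc orderOf ((φ a : ↥H₂) : GL (Fin 2) F)
      = orderOf (φ a) := orderOf_injective H₂.subtype (Subgroup.subtype_injective _) (φ a)
    _ = orderOf a := orderOf_injective φ.toMonoidHom φ.injective a
    _ = orderOf ((a : ↥H₁) : GL (Fin 2) F) :=
        (orderOf_injective H₁.subtype (Subgroup.subtype_injective _) a).symm

lemma card_O_transfer (φ : ↥H₁ ≃* ↥H₂) {O₁ O₂ : Subgroup (GL (Fin 2) F)}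
    (c₁ : ∀ g, g ∈ O₁ ↔ (g ∈ H₁ ∧ Odd (orderOf g)))
    (c₂ : ∀ g, g ∈ O₂ ↔ (g ∈ H₂ ∧ Odd (orderOf g))) :
    Nat.card ↥O₁ = Nat.card ↥O₂ := by
  apply Nat.card_congr
  refine ⟨fun g => ⟨↑(φ ⟨↑g, ((c₁ _).mp g.2).1⟩), ?_⟩,
    fun g => ⟨↑(φ.symm ⟨↑g, ((c₂ _).mp g.2).1⟩), ?_⟩, ?_, ?_⟩
  · rw [c₂]
    refine ⟨(φ _).2, ?_⟩
    rw [orderOf_phi]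
    exact ((c₁ _).mp g.2).2
  · rw [c₁]
    refine ⟨(φ.symm _).2, ?_⟩
    rw [orderOf_phi φ.symm]
    exact ((c₂ _).mp g.2).2
  · intro g
    apply Subtype.ext
    simp
  · intro g
    apply Subtype.ext
    simp

lemma card_OSc_transfer (φ : ↥H₁ ≃* ↥H₂) {A₁ A₂ : Subgroup (GL (Fin 2) F)}
    (c₁ : ∀ g, g ∈ A₁ ↔ (g ∈ H₁ ∧ Odd (orderOf g) ∧ ∀ h ∈ H₁, g * h = h * g))
    (c₂ : ∀ g, g ∈ A₂ ↔ (g ∈ H₂ ∧ Odd (orderOf g) ∧ ∀ h ∈ H₂, g * h = h * g)) :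
    Nat.card ↥A₁ = Nat.card ↥A₂ := by
  have comm_transfer : ∀ (K₁ K₂ : Subgroup (GL (Fin 2) F)) (ψ : ↥K₁ ≃* ↥K₂)
      (g : GL (Fin 2) F) (hg : g ∈ K₁),
      (∀ h ∈ K₁, g * h = h * g) → (∀ h ∈ K₂, ↑(ψ ⟨g, hg⟩) * h = h * ↑(ψ ⟨g, hg⟩)) := by
    intro K₁ K₂ ψ g hg hcomm h hh
    obtain ⟨b, rfl⟩ : ∃ b : ↥K₁, (ψ b : GL (Fin 2) F) = h :=
      ⟨ψ.symm ⟨h, hh⟩, by simp⟩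
    have : (⟨g, hg⟩ : ↥K₁) * b = b * ⟨g, hg⟩ := by
      apply Subtype.ext
      exact hcomm _ b.2
    calc (ψ ⟨g, hg⟩ : GL (Fin 2) F) * ↑(ψ b) = ↑(ψ (⟨g, hg⟩ * b)) := by
          rw [_root_.map_mul]; rfl
      _ = ↑(ψ (b * ⟨g, hg⟩)) := by rw [this]
      _ = ↑(ψ b) * ↑(ψ ⟨g, hg⟩) := by rw [_root_.map_mul]; rfl
  apply Nat.card_congr
  refine ⟨fun g => ⟨↑(φ ⟨↑g, ((c₁ _).mp g.2).1⟩), ?_⟩,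
    fun g => ⟨↑(φ.symm ⟨↑g, ((c₂ _).mp g.2).1⟩), ?_⟩, ?_, ?_⟩
  · rw [c₂]
    refine ⟨(φ _).2, ?_, ?_⟩
    · rw [orderOf_phi]
      exact ((c₁ _).mp g.2).2.1
    · exact comm_transfer H₁ H₂ φ _ _ ((c₁ _).mp g.2).2.2
  · rw [c₁]
    refine ⟨(φ.symm _).2, ?_, ?_⟩
    · rw [orderOf_phi φ.symm]
      exact ((c₂ _).mp g.2).2.1
    · exact comm_transfer H₂ H₁ φ.symm _ _ ((c₂ _).mp g.2).2.2
  · intro g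
    apply Subtype.ext
    simp
  · intro g
    apply Subtype.ext
    simp

end Transfer

section Reverse

variable {H₁ H₂ L₁ L₂ : Subgroup (GL (Fin 2) F)} {x₁ x₂ : GL (Fin 2) F}

lemma mulantidGL {l g : GL (Fin 2) F} (hl : IsAnti2 (l : Matrix (Fin 2) (Fin 2) F))
    (hg : IsDiag2 (g : Matrix (Fin 2) (Fin 2) F)) :
    IsAnti2 ((l * g : GL (Fin 2) F) : Matrix (Fin 2) (Fin 2) F) := by
  rw [Units.val_mul]; exact hl.mul_diag hg

lemma mulaaGL {l g : GL (Fin 2) F} (hl : IsAnti2 (l : Matrix (Fin 2) (Fin 2) F))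
    (hg : IsAnti2 (g : Matrix (Fin 2) (Fin 2) F)) :
    IsDiag2 ((l * g : GL (Fin 2) F) : Matrix (Fin 2) (Fin 2) F) := by
  rw [Units.val_mul]; exact hl.mul_anti hg

lemma reverse_iso
    (hH₁M : H₁ ≤ Msub F)
    (hL₁D : L₁ ≤ Dsub F) (hL₂D : L₂ ≤ Dsub F)
    (hL₁H : L₁ ≤ H₁) (hL₂H : L₂ ≤ H₂)
    (hn₁ : ∀ k ∈ H₁, ∀ l ∈ L₁, k * l * k⁻¹ ∈ L₁)
    (hn₂ : ∀ k ∈ H₂, ∀ l ∈ L₂, k * l * k⁻¹ ∈ L₂)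
    (hx₁M : x₁ ∈ Msub F) (hx₁D : x₁ ∉ Dsub F)
    (hx₂M : x₂ ∈ Msub F) (hx₂D : x₂ ∉ Dsub F)
    (ho₁ : orderOf x₁ = 2 ∨ orderOf x₁ = 4)
    (ho₂ : orderOf x₂ = 2 ∨ orderOf x₂ = 4)
    (hgen₁ : L₁ ⊔ Subgroup.closure {x₁} = H₁) (hgen₂ : L₂ ⊔ Subgroup.closure {x₂} = H₂)
    (htriv₁ : L₁ ⊓ Subgroup.closure {x₁} = ⊥) (htriv₂ : L₂ ⊓ Subgroup.closure {x₂} = ⊥)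
    (hL : L₁ = L₂) (hord : orderOf x₁ = orderOf x₂) :
    Nonempty (↥H₁ ≃* ↥H₂) := by
  classical
  have hH₂M' : ∀ g ∈ H₂, IsDiag2 (g : Matrix (Fin 2) (Fin 2) F) ∨
      IsAnti2 (g : Matrix (Fin 2) (Fin 2) F) := by
    intro g hg
    obtain ⟨l, hl, k, hk, rfl⟩ := decomp_of hL₂H hn₂ ho₂ hgen₂ g hg
    have hld := hL₂D hl
    have hxa₂ := x_anti_of hx₂M hx₂D
    rcases Nat.even_or_odd k with ⟨j, hj⟩ | ⟨j, hj⟩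
    · left
      have hxk : IsDiag2 ((x₂ ^ k : GL (Fin 2) F) : Matrix (Fin 2) (Fin 2) F) := by
        have hrw : (x₂ ^ k : GL (Fin 2) F) = (x₂ ^ 2) ^ j := by
          rw [hj, ← two_mul, pow_mul]
        rw [hrw]
        exact (diag_pow (anti_sq hxa₂).1 j).1
      exact muldiagGL hld hxk
    · right
      have hxk : IsAnti2 ((x₂ ^ k : GL (Fin 2) F) : Matrix (Fin 2) (Fin 2) F) := by
        have hrw : (x₂ ^ k : GL (Fin 2) F) = (x₂ ^ 2) ^ j * x₂ := by
          rw [hj, pow_succ, pow_mul]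
        rw [hrw]
        exact mulantiGL (diag_pow (anti_sq hxa₂).1 j).1 hxa₂
      exact mulantiGL hld hxk
  have hxa₁ := x_anti_of hx₁M hx₁D
  have hxa₂ := x_anti_of hx₂M hx₂D
  have hx₁H : x₁ ∈ H₁ := x_mem_of hgen₁
  have hx₂H : x₂ ∈ H₂ := x_mem_of hgen₂
  have hsq : (x₁ ^ 2 : GL (Fin 2) F) = x₂ ^ 2 := by
    rcases ho₁ with h2 | h4
    · rw [(order_two_s hxa₁ h2).2, (order_two_s hxa₂ (by rw [← hord]; exact h2)).2]
    · rw [(order_four_s hxa₁ h4).2.2, (order_four_s hxa₂ (by rw [← hord]; exact h4)).2.2]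
  set t := x₁⁻¹ * x₂ with ht
  set t' := x₂⁻¹ * x₁ with ht'
  have htd : IsDiag2 (t : Matrix (Fin 2) (Fin 2) F) := by
    rw [ht, Units.val_mul]
    exact (inv_anti hxa₁).mul_anti hxa₂
  have htd' : IsDiag2 (t' : Matrix (Fin 2) (Fin 2) F) := by
    rw [ht', Units.val_mul]
    exact (inv_anti hxa₂).mul_anti hxa₁
  have hdetx : gdet x₁ = gdet x₂ := by
    apply Units.ext
    rw [gdet_val, gdet_val, Matrix.det_fin_two, Matrix.det_fin_two,
      hxa₁.1, hxa₁.2, hxa₂.1, hxa₂.2]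
    have h1 := (anti_sq hxa₁).2.1
    have h2 := (anti_sq hxa₂).2.1
    rw [hsq] at h1
    rw [h1.symm.trans h2]
  have hdett : gdet t = 1 := by
    have : gdet t = (gdet x₁)⁻¹ * gdet x₂ := by
      rw [ht, MonoidHom.map_mul, MonoidHom.map_inv]
    rw [this, hdetx, inv_mul_cancel]
  have hdettval : (t : Matrix (Fin 2) (Fin 2) F) 0 0 * (t : Matrix (Fin 2) (Fin 2) F) 1 1 = 1 := by
    have hval : ((gdet t : Fˣ) : F) = 1 := by rw [hdett]; rfl
    rw [gdet_val, Matrix.det_fin_two, htd.1, htd.2] at hval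
    simpa using hval
  have hkey : ∀ g : GL (Fin 2) F, IsAnti2 (g : Matrix (Fin 2) (Fin 2) F) →
      g * t = t⁻¹ * g := by
    intro g hga
    obtain ⟨hcd, hc00, hc11⟩ := conj_anti_diag hga htd
    have h1 : (g * t * g⁻¹) * t = 1 := by
      apply gl_ext
      ext i j
      rw [mul_entry (g * t * g⁻¹) t i j]
      fin_cases i <;> fin_cases j <;>
        simp [hcd.1, hcd.2, htd.1, htd.2, hc00, hc11, Matrix.one_apply,
          hdettval, mul_comm]
    have h2 : g * t * g⁻¹ = t⁻¹ := eq_inv_of_mul_eq_one_left h1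
    calc g * t = (g * t * g⁻¹) * g := by group
      _ = t⁻¹ * g := by rw [h2]
  have hkey2 : ∀ g : GL (Fin 2) F, IsAnti2 (g : Matrix (Fin 2) (Fin 2) F) →
      t * (g * t) = g := by
    intro g hga
    rw [hkey g hga]
    group
  have htt' : t * t' = 1 := by rw [ht, ht']; group
  have ht't : t' * t = 1 := by rw [ht, ht']; group
  -- diagonal membership transfers
  have hmd : ∀ g ∈ H₁, IsDiag2 (g : Matrix (Fin 2) (Fin 2) F) → g ∈ H₂ := by
    intro g hg hgd
    rcases diag_decomp_of hL₁D hL₁H hn₁ hx₁M hx₁D ho₁ hgen₁ g hg hgd with hgL | ⟨-, l, hl, rfl⟩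
    · exact hL₂H (hL ▸ hgL)
    · refine H₂.mul_mem (hL₂H (hL ▸ hl)) ?_
      rw [hsq]
      exact H₂.pow_mem hx₂H 2
  have hmd' : ∀ g ∈ H₂, IsDiag2 (g : Matrix (Fin 2) (Fin 2) F) → g ∈ H₁ := by
    intro g hg hgd
    rcases diag_decomp_of hL₂D hL₂H hn₂ hx₂M hx₂D ho₂ hgen₂ g hg hgd with hgL | ⟨-, l, hl, rfl⟩
    · exact hL₁H (hL ▸ hgL)
    · refine H₁.mul_mem (hL₁H (hL ▸ hl)) ?_
      rw [← hsq]
      exact H₁.pow_mem hx₁H 2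
  have hmem₁ : ∀ g ∈ H₁, ¬ IsDiag2 (g : Matrix (Fin 2) (Fin 2) F) → g * t ∈ H₂ := by
    intro g hg hgnd
    have hga : IsAnti2 (g : Matrix (Fin 2) (Fin 2) F) := (hH₁M hg).resolve_left hgnd
    have h1 : g * x₁⁻¹ ∈ H₁ := H₁.mul_mem hg (H₁.inv_mem hx₁H)
    have h2 : IsDiag2 ((g * x₁⁻¹ : GL (Fin 2) F) : Matrix (Fin 2) (Fin 2) F) := by
      rw [Units.val_mul]
      exact hga.mul_anti (inv_anti hxa₁)
    have h3 : g * x₁⁻¹ ∈ H₂ := hmd _ h1 h2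
    have h4 : g * t = (g * x₁⁻¹) * x₂ := by rw [ht]; group
    rw [h4]
    exact H₂.mul_mem h3 hx₂H
  have hmem₂ : ∀ g ∈ H₂, ¬ IsDiag2 (g : Matrix (Fin 2) (Fin 2) F) → g * t' ∈ H₁ := by
    intro g hg hgnd
    have hga : IsAnti2 (g : Matrix (Fin 2) (Fin 2) F) := (hH₂M' g hg).resolve_left hgnd
    have h1 : g * x₂⁻¹ ∈ H₂ := H₂.mul_mem hg (H₂.inv_mem hx₂H)
    have h2 : IsDiag2 ((g * x₂⁻¹ : GL (Fin 2) F) : Matrix (Fin 2) (Fin 2) F) := by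
      rw [Units.val_mul]
      exact hga.mul_anti (inv_anti hxa₂)
    have h3 : g * x₂⁻¹ ∈ H₁ := hmd' _ h1 h2
    have h4 : g * t' = (g * x₂⁻¹) * x₁ := by rw [ht']; group
    rw [h4]
    exact H₁.mul_mem h3 hx₁H
  refine ⟨{
    toFun := fun a => if h : IsDiag2 ((a : GL (Fin 2) F) : Matrix (Fin 2) (Fin 2) F)
      then ⟨a, hmd _ a.2 h⟩ else ⟨a * t, hmem₁ _ a.2 h⟩
    invFun := fun b => if h : IsDiag2 ((b : GL (Fin 2) F) : Matrix (Fin 2) (Fin 2) F)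
      then ⟨b, hmd' _ b.2 h⟩ else ⟨b * t', hmem₂ _ b.2 h⟩
    left_inv := ?_
    right_inv := ?_
    map_mul' := ?_ }⟩
  · intro a
    dsimp only
    rcases hH₁M a.2 with hda | haa
    · rw [dif_pos hda, dif_pos hda]
    · have hnda : ¬ IsDiag2 ((a : GL (Fin 2) F) : Matrix (Fin 2) (Fin 2) F) :=
        fun h => not_diag_anti h haa
      rw [dif_neg hnda]
      have hat : IsAnti2 (((a : GL (Fin 2) F) * t : GL (Fin 2) F) : Matrix (Fin 2) (Fin 2) F) :=
        mulantidGL haa htd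
      rw [dif_neg (fun h => not_diag_anti h hat)]
      apply Subtype.ext
      show ((a : GL (Fin 2) F) * t) * t' = a
      rw [mul_assoc, htt', mul_one]
  · intro b
    dsimp only
    rcases hH₂M' _ b.2 with hdb | hba
    · rw [dif_pos hdb, dif_pos hdb]
    · have hndb : ¬ IsDiag2 ((b : GL (Fin 2) F) : Matrix (Fin 2) (Fin 2) F) :=
        fun h => not_diag_anti h hba
      rw [dif_neg hndb]
      have hbt : IsAnti2 (((b : GL (Fin 2) F) * t' : GL (Fin 2) F) : Matrix (Fin 2) (Fin 2) F) :=
        mulantidGL hba htd'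
      rw [dif_neg (fun h => not_diag_anti h hbt)]
      apply Subtype.ext
      show ((b : GL (Fin 2) F) * t') * t = b
      rw [mul_assoc, ht't, mul_one]
  · intro a b
    rcases hH₁M a.2 with hda | haa <;> rcases hH₁M b.2 with hdb | hba
    · have hd : IsDiag2 (((a * b : ↥H₁) : GL (Fin 2) F) : Matrix (Fin 2) (Fin 2) F) :=
        muldiagGL hda hdb
      rw [dif_pos hd, dif_pos hda, dif_pos hdb]
      rfl
    · have hd : IsAnti2 (((a * b : ↥H₁) : GL (Fin 2) F) : Matrix (Fin 2) (Fin 2) F) :=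
        mulantiGL hda hba
      rw [dif_neg (fun h => not_diag_anti h hd), dif_pos hda,
        dif_neg (fun h => not_diag_anti h hba)]
      apply Subtype.ext
      show ((a : GL (Fin 2) F) * b) * t = (a : GL (Fin 2) F) * ((b : GL (Fin 2) F) * t)
      rw [mul_assoc]
    · have hd : IsAnti2 (((a * b : ↥H₁) : GL (Fin 2) F) : Matrix (Fin 2) (Fin 2) F) :=
        mulantidGL haa hdb
      rw [dif_neg (fun h => not_diag_anti h hd), dif_neg (fun h => not_diag_anti h haa),
        dif_pos hdb]
      apply Subtype.ext
      show ((a : GL (Fin 2) F) * b) * t = ((a : GL (Fin 2) F) * t) * b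
      have hcm : t * (b : GL (Fin 2) F) = (b : GL (Fin 2) F) * t := diag_comm htd hdb
      rw [mul_assoc, ← hcm, ← mul_assoc]
    · have hd : IsDiag2 (((a * b : ↥H₁) : GL (Fin 2) F) : Matrix (Fin 2) (Fin 2) F) :=
        mulaaGL haa hba
      rw [dif_pos hd, dif_neg (fun h => not_diag_anti h haa),
        dif_neg (fun h => not_diag_anti h hba)]
      apply Subtype.ext
      show (a : GL (Fin 2) F) * b = ((a : GL (Fin 2) F) * t) * ((b : GL (Fin 2) F) * t)
      calc (a : GL (Fin 2) F) * b
          = (a : GL (Fin 2) F) * (t * ((b : GL (Fin 2) F) * t)) := by rw [hkey2 _ hba]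
        _ = ((a : GL (Fin 2) F) * t) * ((b : GL (Fin 2) F) * t) := by group

end Reverse



end CFaux


/-- For imprimitive subgroups `Hᵢ = Lᵢ ⋊ ⟨xᵢ⟩ ≤ M(2,q)` of cube-free order coprime to `p`
(with `Lᵢ ≤ D(2,q)` normal in `Hᵢ` and `xᵢ ∈ M(2,q) ∖ D(2,q)` of order 2 or 4):
`H₁ ≅ H₂` iff `L₁ = L₂` and `⟨x₁⟩`, `⟨x₂⟩` have the same order. -/
theorem imprimitive_iso_iff
    (p k₀ : ℕ) (hp : p.Prime) (hk₀ : 1 ≤ k₀)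
    (F : Type) [Field F] [Fintype F] (hF : Fintype.card F = p ^ k₀)
    (H₁ H₂ : Subgroup (GL (Fin 2) F)) (hH₁M : H₁ ≤ Msub F) (hH₂M : H₂ ≤ Msub F)
    (himp₁ : Imprimitive F H₁) (himp₂ : Imprimitive F H₂)
    (hcf₁ : CubeFree (Nat.card ↥H₁)) (hcf₂ : CubeFree (Nat.card ↥H₂))
    (hpm₁ : ¬ p ∣ Nat.card ↥H₁) (hpm₂ : ¬ p ∣ Nat.card ↥H₂)
    (L₁ L₂ : Subgroup (GL (Fin 2) F)) (x₁ x₂ : GL (Fin 2) F)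
    (hL₁D : L₁ ≤ Dsub F) (hL₂D : L₂ ≤ Dsub F)
    (hL₁H : L₁ ≤ H₁) (hL₂H : L₂ ≤ H₂)
    (hn₁ : ∀ k ∈ H₁, ∀ l ∈ L₁, k * l * k⁻¹ ∈ L₁)
    (hn₂ : ∀ k ∈ H₂, ∀ l ∈ L₂, k * l * k⁻¹ ∈ L₂)
    (hx₁M : x₁ ∈ Msub F) (hx₁D : x₁ ∉ Dsub F)
    (hx₂M : x₂ ∈ Msub F) (hx₂D : x₂ ∉ Dsub F)
    (ho₁ : orderOf x₁ = 2 ∨ orderOf x₁ = 4)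
    (ho₂ : orderOf x₂ = 2 ∨ orderOf x₂ = 4)
    (hgen₁ : L₁ ⊔ Subgroup.closure {x₁} = H₁) (hgen₂ : L₂ ⊔ Subgroup.closure {x₂} = H₂)
    (htriv₁ : L₁ ⊓ Subgroup.closure {x₁} = ⊥) (htriv₂ : L₂ ⊓ Subgroup.closure {x₂} = ⊥) :
    Nonempty (↥H₁ ≃* ↥H₂) ↔
      (L₁ = L₂ ∧
        Nat.card ↥(Subgroup.closure ({x₁} : Set (GL (Fin 2) F))) =
          Nat.card ↥(Subgroup.closure ({x₂} : Set (GL (Fin 2) F)))) := by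
  classical
  constructor
  · rintro ⟨φ⟩
    have hordeq : orderOf x₁ = orderOf x₂ := by
      rcases ho₁ with h1 | h1 <;> rcases ho₂ with h2 | h2
      · rw [h1, h2]
      · exfalso
        have hx₂H : x₂ ∈ H₂ := CFaux.x_mem_of hgen₂
        refine CFaux.no_order4_of hL₁D hL₁H hn₁ hx₁M hx₁D h1 hgen₁ htriv₁ hcf₁
          ↑(φ.symm ⟨x₂, hx₂H⟩) (φ.symm ⟨x₂, hx₂H⟩).2 ?_
        rw [CFaux.orderOf_phi φ.symm ⟨x₂, hx₂H⟩]
        exact h2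
      · exfalso
        have hx₁H : x₁ ∈ H₁ := CFaux.x_mem_of hgen₁
        refine CFaux.no_order4_of hL₂D hL₂H hn₂ hx₂M hx₂D h2 hgen₂ htriv₂ hcf₂
          ↑(φ ⟨x₁, hx₁H⟩) (φ ⟨x₁, hx₁H⟩).2 ?_
        rw [CFaux.orderOf_phi φ ⟨x₁, hx₁H⟩]
        exact h1
      · rw [h1, h2]
    have hclos : Nat.card ↥(Subgroup.closure ({x₁} : Set (GL (Fin 2) F))) =
        Nat.card ↥(Subgroup.closure ({x₂} : Set (GL (Fin 2) F))) := by
      rw [← Subgroup.zpowers_eq_closure, ← Subgroup.zpowers_eq_closure,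
        Nat.card_zpowers, Nat.card_zpowers, hordeq]
    refine ⟨?_, hclos⟩
    have hcard1 := CFaux.card_eq_of hL₁D hL₁H hn₁ ho₁ hgen₁ htriv₁
    have hcard2 := CFaux.card_eq_of hL₂D hL₂H hn₂ ho₂ hgen₂ htriv₂
    have hN : Nat.card ↥H₁ = Nat.card ↥H₂ := Nat.card_congr φ.toEquiv
    have hnpos : 0 < orderOf x₂ := by rcases ho₂ with h | h <;> omega
    have hm : Nat.card ↥L₁ = Nat.card ↥L₂ := by
      have heq : Nat.card ↥L₁ * orderOf x₁ = Nat.card ↥L₂ * orderOf x₂ :=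
        hcard1.symm.trans (hN.trans hcard2)
      rw [hordeq] at heq
      exact Nat.eq_of_mul_eq_mul_right hnpos heq
    have h4m : ¬ 4 ∣ Nat.card ↥L₁ := by
      rintro ⟨c, hc⟩
      apply hcf₁ 2 Nat.prime_two
      rw [hcard1, hc]
      rcases ho₁ with h | h <;> rw [h]
      · exact ⟨c, by ring⟩
      · exact ⟨2 * c, by ring⟩
    have h4m₂ : ¬ 4 ∣ Nat.card ↥L₂ := hm ▸ h4m
    have c₁ := CFaux.Osub_char hL₁D hL₁H hn₁ hx₁M hx₁D ho₁ hgen₁ htriv₁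
    have c₂ := CFaux.Osub_char hL₂D hL₂H hn₂ hx₂M hx₂D ho₂ hgen₂ htriv₂
    have cA₁ := CFaux.OSc_char hL₁D hL₁H hn₁ hx₁M hx₁D ho₁ hgen₁ htriv₁
    have cA₂ := CFaux.OSc_char hL₂D hL₂H hn₂ hx₂M hx₂D ho₂ hgen₂ htriv₂
    have hcardO : Nat.card ↥(CFaux.Osub L₁ hL₁D) = Nat.card ↥(CFaux.Osub L₂ hL₂D) :=
      CFaux.card_O_transfer φ c₁ c₂
    have hcardA : Nat.card ↥(CFaux.Osub L₁ hL₁D ⊓ CFaux.Sc F)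
        = Nat.card ↥(CFaux.Osub L₂ hL₂D ⊓ CFaux.Sc F) :=
      CFaux.card_OSc_transfer φ cA₁ cA₂
    have hScinj : ∀ g ∈ (CFaux.Sc F : Set (GL (Fin 2) F)),
        ∀ h ∈ (CFaux.Sc F : Set (GL (Fin 2) F)),
        (g : Matrix (Fin 2) (Fin 2) F) 0 0 = (h : Matrix (Fin 2) (Fin 2) F) 0 0 → g = h := by
      rintro g ⟨hgd, hgs⟩ h ⟨hhd, hhs⟩ h00
      apply CFaux.gl_ext
      ext i j
      fin_cases i <;> fin_cases j <;>
        simp [hgd.1, hgd.2, hhd.1, hhd.2, h00, ← hgs, ← hhs]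
    have hA : CFaux.Osub L₁ hL₁D ⊓ CFaux.Sc F = CFaux.Osub L₂ hL₂D ⊓ CFaux.Sc F := by
      refine CFaux.subgroup_eq_of_card_eq (T := (CFaux.Sc F : Set (GL (Fin 2) F)))
        (fun g hg => hg.1) hScinj (fun g hg => hg.2) (fun g hg => hg.2) hcardA
    have hOc1 := CFaux.Osub_card hL₁D hL₁H hn₁ hx₁M hx₁D hgen₁
    have hOc2 := CFaux.Osub_card hL₂D hL₂H hn₂ hx₂M hx₂D hgen₂
    haveI : Nonempty ↥(CFaux.Osub L₁ hL₁D ⊓ CFaux.Sc F) := ⟨⟨1, Subgroup.one_mem _⟩⟩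
    have hApos : 0 < Nat.card ↥(CFaux.Osub L₁ hL₁D ⊓ CFaux.Sc F) := Nat.card_pos
    have hcardB : Nat.card ↥(CFaux.Osub L₁ hL₁D ⊓ CFaux.Ac F)
        = Nat.card ↥(CFaux.Osub L₂ hL₂D ⊓ CFaux.Ac F) := by
      apply Nat.eq_of_mul_eq_mul_left hApos
      calc Nat.card ↥(CFaux.Osub L₁ hL₁D ⊓ CFaux.Sc F) *
            Nat.card ↥(CFaux.Osub L₁ hL₁D ⊓ CFaux.Ac F)
          = Nat.card ↥(CFaux.Osub L₁ hL₁D) := hOc1.symm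
        _ = Nat.card ↥(CFaux.Osub L₂ hL₂D) := hcardO
        _ = Nat.card ↥(CFaux.Osub L₂ hL₂D ⊓ CFaux.Sc F) *
            Nat.card ↥(CFaux.Osub L₂ hL₂D ⊓ CFaux.Ac F) := hOc2
        _ = Nat.card ↥(CFaux.Osub L₁ hL₁D ⊓ CFaux.Sc F) *
            Nat.card ↥(CFaux.Osub L₂ hL₂D ⊓ CFaux.Ac F) := by rw [hcardA]
    have hAcinj : ∀ g ∈ (CFaux.Ac F : Set (GL (Fin 2) F)),
        ∀ h ∈ (CFaux.Ac F : Set (GL (Fin 2) F)),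
        (g : Matrix (Fin 2) (Fin 2) F) 0 0 = (h : Matrix (Fin 2) (Fin 2) F) 0 0 → g = h := by
      rintro g ⟨hgd, hgs⟩ h ⟨hhd, hhs⟩ h00
      have hg0 : (g : Matrix (Fin 2) (Fin 2) F) 0 0 ≠ 0 := by
        intro h0
        rw [h0, zero_mul] at hgs
        exact zero_ne_one hgs
      have h11 : (g : Matrix (Fin 2) (Fin 2) F) 1 1 = (h : Matrix (Fin 2) (Fin 2) F) 1 1 := by
        apply mul_left_cancel₀ hg0
        rw [hgs, h00, hhs]
      apply CFaux.gl_ext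
      ext i j
      fin_cases i <;> fin_cases j <;>
        simp [hgd.1, hgd.2, hhd.1, hhd.2, h00, h11]
    have hB : CFaux.Osub L₁ hL₁D ⊓ CFaux.Ac F = CFaux.Osub L₂ hL₂D ⊓ CFaux.Ac F := by
      refine CFaux.subgroup_eq_of_card_eq (T := (CFaux.Ac F : Set (GL (Fin 2) F)))
        (fun g hg => hg.1) hAcinj (fun g hg => hg.2) (fun g hg => hg.2) hcardB
    have hO : CFaux.Osub L₁ hL₁D = CFaux.Osub L₂ hL₂D := by
      apply le_antisymm
      · intro g hg
        obtain ⟨a, ha, b, hb, rfl⟩ :=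
          CFaux.Osub_decomp hL₁D hL₁H hn₁ hx₁M hx₁D hgen₁ g hg
        have ha' : a ∈ CFaux.Osub L₂ hL₂D ⊓ CFaux.Sc F := hA ▸ ha
        have hb' : b ∈ CFaux.Osub L₂ hL₂D ⊓ CFaux.Ac F := hB ▸ hb
        exact (CFaux.Osub L₂ hL₂D).mul_mem ha'.1 hb'.1
      · intro g hg
        obtain ⟨a, ha, b, hb, rfl⟩ :=
          CFaux.Osub_decomp hL₂D hL₂H hn₂ hx₂M hx₂D hgen₂ g hg
        have ha' : a ∈ CFaux.Osub L₁ hL₁D ⊓ CFaux.Sc F := hA.symm ▸ ha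
        have hb' : b ∈ CFaux.Osub L₁ hL₁D ⊓ CFaux.Ac F := hB.symm ▸ hb
        exact (CFaux.Osub L₁ hL₁D).mul_mem ha'.1 hb'.1
    by_cases h2m : 2 ∣ Nat.card ↥L₁
    · have hneg₁ : (-1 : GL (Fin 2) F) ∈ L₁ :=
        CFaux.negone_mem_of hL₁D hL₁H hn₁ hx₁M hx₁D hgen₁ h2m h4m
      have hneg₂ : (-1 : GL (Fin 2) F) ∈ L₂ :=
        CFaux.negone_mem_of hL₂D hL₂H hn₂ hx₂M hx₂D hgen₂ (hm ▸ h2m) h4m₂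
      apply le_antisymm
      · intro g hg
        obtain ⟨a, ha, hcase⟩ :=
          CFaux.two_part_of hL₁D hL₁H hn₁ hx₁M hx₁D hgen₁ h4m g hg
        have haL₂ : a ∈ L₂ := CFaux.Osub_le hL₂D (hO ▸ ha)
        rcases hcase with rfl | rfl
        · exact haL₂
        · exact L₂.mul_mem haL₂ hneg₂
      · intro g hg
        obtain ⟨a, ha, hcase⟩ :=
          CFaux.two_part_of hL₂D hL₂H hn₂ hx₂M hx₂D hgen₂ h4m₂ g hg
        have haL₁ : a ∈ L₁ := CFaux.Osub_le hL₁D (hO.symm ▸ ha)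
        rcases hcase with rfl | rfl
        · exact haL₁
        · exact L₁.mul_mem haL₁ hneg₁
    · have h2m₂ : ¬ 2 ∣ Nat.card ↥L₂ := hm ▸ h2m
      apply le_antisymm
      · intro g hg
        exact CFaux.Osub_le hL₂D (hO ▸ (⟨hg, CFaux.L_odd_of h2m g hg⟩ : g ∈ CFaux.Osub L₁ hL₁D))
      · intro g hg
        exact CFaux.Osub_le hL₁D
          (hO.symm ▸ (⟨hg, CFaux.L_odd_of h2m₂ g hg⟩ : g ∈ CFaux.Osub L₂ hL₂D))
  · rintro ⟨hL, hclos⟩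
    have hordeq : orderOf x₁ = orderOf x₂ := by
      rw [← Nat.card_zpowers x₁, ← Nat.card_zpowers x₂,
        Subgroup.zpowers_eq_closure, Subgroup.zpowers_eq_closure, hclos]
    exact CFaux.reverse_iso hH₁M hL₁D hL₂D hL₁H hL₂H hn₁ hn₂ hx₁M hx₁D hx₂M hx₂D
      ho₁ ho₂ hgen₁ hgen₂ htriv₁ htriv₂ hL hordeq
end
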